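/- For all positive integers n and r with r ≥ 2, there exist nonnegative integers γ⁺_i (0 ≤ i ≤ ⌊n/2⌋) and γ⁻_i (1 ≤ i ≤ ⌊(n+1)/2⌋) such that the colored binomial Eulerian polynomial decomposes as Ã_{n,r}(t) = Σ_{i=0}^{⌊n/2⌋} γ⁺_i t^i (1+t)^{n−2i} + Σ_{i=1}^{⌊(n+1)/2⌋} γ⁻_i t^i (1+t)^{n+1−2i}; that is, Ã_{n,r}(t) is a sum of a γ-positive polynomial with center n/2 and a γ-positive polynomial with center (n+1)/2 and zero constant term. -/

import Mathlib

open Polynomial Finset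

/-- An `r`-colored permutation of `[n] = {1,…,n}`: a pair `(σ, ε)` of a permutation `σ`
of `[n]` and a color vector `ε ∈ {0,…,r−1}ⁿ`; the set of these is `ℤ_r ≀ S_n`. -/
abbrev ColoredPerm (n r : ℕ) := Equiv.Perm (Fin n) × (Fin n → Fin r)

/-- The (1-based) value `σ(k) ∈ [n]` of a permutation of `[n]` at position `k ∈ [n]`,
with the convention `σ(k) = n+1` for positions outside `[1,n]`. -/
def sVal {n : ℕ} (σ : Equiv.Perm (Fin n)) (k : ℕ) : ℕ :=
  if h : 1 ≤ k ∧ k ≤ n then (σ ⟨k - 1, by omega⟩ : ℕ) + 1 else n + 1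

/-- The (1-based) color `ε_k` at position `k ∈ [n]`, with the convention `ε_k = 0`
for positions outside `[1,n]`. -/
def eVal {n r : ℕ} (ε : Fin n → Fin r) (k : ℕ) : ℕ :=
  if h : 1 ≤ k ∧ k ≤ n then (ε ⟨k - 1, by omega⟩ : ℕ) else 0

/-- The descent set `Des(w) ⊆ [n]` of an `r`-colored permutation `w = (σ, ε)`:
`k ∈ [n]` is a descent if `ε_k > ε_{k+1}`, or `ε_k = ε_{k+1}` and `σ(k) > σ(k+1)`,
with the conventions `σ(n+1) = n+1` and `ε_{n+1} = 0`. -/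
def desSet {n r : ℕ} (w : ColoredPerm n r) : Finset ℕ :=
  (Finset.Icc 1 n).filter fun k =>
    eVal w.2 (k + 1) < eVal w.2 k ∨
      (eVal w.2 k = eVal w.2 (k + 1) ∧ sVal w.1 (k + 1) < sVal w.1 k)

/-- The ascent set `Asc(w) = [n] ∖ Des(w)`. -/
def ascSet {n r : ℕ} (w : ColoredPerm n r) : Finset ℕ :=
  Finset.Icc 1 n \ desSet w

/-- The excedance set of `w = (σ, ε)`: the set of `k ∈ [n]` with `σ(k) > k`, or
`σ(k) = k` and `ε_k ≠ 0`. -/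
def excSet {n r : ℕ} (w : ColoredPerm n r) : Finset ℕ :=
  (Finset.Icc 1 n).filter fun k => k < sVal w.1 k ∨ (sVal w.1 k = k ∧ eVal w.2 k ≠ 0)

/-- The colored Eulerian polynomial `A_{n,r}(t) = Σ_{w ∈ ℤ_r≀S_n} t^{des(w)}`
(with `A_{0,r}(t) = 1`). -/
noncomputable def colEulerian (n r : ℕ) : ℤ[X] :=
  ∑ w : ColoredPerm n r, X ^ (desSet w).card

/-- The colored binomial Eulerian polynomial
`Ã_{n,r}(t) = Σ_{m=0}^n C(n,m) t^{n−m} A_{m,r}(t)`. -/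
noncomputable def colBinomEulerian (n r : ℕ) : ℤ[X] :=
  ∑ m ∈ range (n + 1), (n.choose m : ℤ[X]) * X ^ (n - m) * colEulerian m r

/-! ### insertion machinery -/

variable {n r : ℕ}

def insPerm (σ : Equiv.Perm (Fin n)) (j : Fin (n + 1)) : Equiv.Perm (Fin (n + 1)) :=
  (finSuccEquiv' j).trans ((Equiv.optionCongr σ).trans (finSuccEquiv' (Fin.last n)).symm)

@[simp] lemma insPerm_at (σ : Equiv.Perm (Fin n)) (j : Fin (n + 1)) :
    insPerm σ j j = Fin.last n := by
  simp [insPerm, finSuccEquiv'_at]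

@[simp] lemma insPerm_succAbove (σ : Equiv.Perm (Fin n)) (j : Fin (n + 1)) (k : Fin n) :
    insPerm σ j (j.succAbove k) = (σ k).castSucc := by
  simp [insPerm, finSuccEquiv'_succAbove, Fin.succAbove_last]

def insCP (w : ColoredPerm n r) (j : Fin (n + 1)) (c : Fin r) : ColoredPerm (n + 1) r :=
  (insPerm w.1 j, j.insertNth c w.2)

lemma insCP_injective :
    Function.Injective (fun p : (ColoredPerm n r × Fin (n + 1)) × Fin r =>
      insCP p.1.1 p.1.2 p.2) := by
  rintro ⟨⟨⟨σ₁, ε₁⟩, j₁⟩, c₁⟩ ⟨⟨⟨σ₂, ε₂⟩, j₂⟩, c₂⟩ h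
  simp only [insCP, Prod.mk.injEq] at h
  obtain ⟨hperm, hcol⟩ := h
  -- j₁ = j₂
  have hj : j₁ = j₂ := by
    by_contra hne
    obtain ⟨k, hk⟩ := Fin.exists_succAbove_eq hne
    have h1 : insPerm σ₁ j₁ j₁ = Fin.last n := insPerm_at _ _
    have h2 : insPerm σ₂ j₂ j₁ = (σ₂ k).castSucc := by
      conv_lhs => rw [← hk]
      rw [insPerm_succAbove]
    rw [hperm] at h1
    rw [h1] at h2
    exact absurd h2.symm (Fin.ne_last_of_lt (Fin.castSucc_lt_last _))
  subst hj
  have hσ : σ₁ = σ₂ := by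
    ext k
    have := congrArg (fun (π : Equiv.Perm (Fin (n+1))) => π (j₁.succAbove k)) hperm
    simp only [insPerm_succAbove] at this
    exact congrArg Fin.val (Fin.castSucc_injective _ this)
  have hc : c₁ = c₂ := by
    have := congrArg (fun f : Fin (n+1) → Fin r => f j₁) hcol
    simpa using this
  have hε : ε₁ = ε₂ := by
    funext k
    have := congrArg (fun f : Fin (n+1) → Fin r => f (j₁.succAbove k)) hcol
    simpa using this
  simp [Equiv.Perm.ext_iff] at hσ ⊢
  exact ⟨⟨fun x => by rw [hσ], hε⟩, hc⟩

lemma insCP_bijective :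
    Function.Bijective (fun p : (ColoredPerm n r × Fin (n + 1)) × Fin r =>
      insCP p.1.1 p.1.2 p.2) := by
  rw [Fintype.bijective_iff_injective_and_card]
  refine ⟨insCP_injective, ?_⟩
  simp [Fintype.card_perm, Fintype.card_fun]
  rw [Nat.factorial_succ]
  ring

/-! ### eVal / sVal under insertion -/

lemma eVal_lt_r (ε : Fin n → Fin r) (k : ℕ) (hr : 0 < r) : eVal ε k < r := by
  unfold eVal; split
  · exact Fin.is_lt _
  · exact hr

lemma sVal_le_n (σ : Equiv.Perm (Fin n)) {k : ℕ} (h1 : 1 ≤ k) (h2 : k ≤ n) :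
    sVal σ k ≤ n := by
  unfold sVal
  rw [dif_pos ⟨h1, h2⟩]
  have := (σ ⟨k - 1, by omega⟩).is_lt
  omega

lemma sVal_le (σ : Equiv.Perm (Fin n)) (k : ℕ) : sVal σ k ≤ n + 1 := by
  unfold sVal; split
  · have := (σ ⟨k - 1, by omega⟩).is_lt; omega
  · omega

lemma eVal_ins_lt (ε : Fin n → Fin r) (j : Fin (n + 1)) (c : Fin r) {k : ℕ}
    (h2 : k ≤ (j : ℕ)) : eVal (j.insertNth c ε) k = eVal ε k := by
  rcases Nat.eq_zero_or_pos k with hk | hk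
  · subst hk; simp [eVal]
  have hkn : k ≤ n := by have := j.is_le; omega
  have hkn' : k - 1 < n := by omega
  unfold eVal
  rw [dif_pos ⟨hk, by omega⟩, dif_pos ⟨hk, hkn⟩]
  have hidx : (⟨k - 1, by omega⟩ : Fin (n + 1)) = j.succAbove ⟨k - 1, hkn'⟩ := by
    rw [Fin.succAbove_of_castSucc_lt]
    · rfl
    · rw [Fin.lt_iff_val_lt_val]; simpa using by omega
  rw [hidx, Fin.insertNth_apply_succAbove]

lemma eVal_ins_at (ε : Fin n → Fin r) (j : Fin (n + 1)) (c : Fin r) :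
    eVal (j.insertNth c ε) ((j : ℕ) + 1) = c := by
  have hj := j.is_le
  unfold eVal
  rw [dif_pos ⟨by omega, by omega⟩]
  have hidx : (⟨(j : ℕ) + 1 - 1, by omega⟩ : Fin (n + 1)) = j := by
    ext; simp
  rw [hidx, Fin.insertNth_apply_same]

lemma eVal_ins_gt (ε : Fin n → Fin r) (j : Fin (n + 1)) (c : Fin r) {k : ℕ}
    (h1 : (j : ℕ) + 2 ≤ k) : eVal (j.insertNth c ε) k = eVal ε (k - 1) := by
  rcases le_or_gt k (n + 1) with hk | hk
  · have hkn' : k - 2 < n := by omega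
    unfold eVal
    rw [dif_pos ⟨by omega, hk⟩, dif_pos ⟨by omega, by omega⟩]
    have hidx : (⟨k - 1, by omega⟩ : Fin (n + 1)) = j.succAbove ⟨k - 2, hkn'⟩ := by
      rw [Fin.succAbove_of_le_castSucc]
      · ext; simp; try omega
      · rw [Fin.le_iff_val_le_val]; simpa using by omega
    rw [hidx, Fin.insertNth_apply_succAbove]
    have h22 : k - 1 - 1 = k - 2 := by omega
    simp [h22]
  · unfold eVal
    rw [dif_neg (by omega), dif_neg (by omega)]

lemma sVal_ins_lt (σ : Equiv.Perm (Fin n)) (j : Fin (n + 1)) {k : ℕ}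
    (h1 : 1 ≤ k) (h2 : k ≤ (j : ℕ)) : sVal (insPerm σ j) k = sVal σ k := by
  have hj := j.is_le
  have hkn' : k - 1 < n := by omega
  unfold sVal
  rw [dif_pos ⟨h1, by omega⟩, dif_pos ⟨h1, by omega⟩]
  have hidx : (⟨k - 1, by omega⟩ : Fin (n + 1)) = j.succAbove ⟨k - 1, hkn'⟩ := by
    rw [Fin.succAbove_of_castSucc_lt]
    · rfl
    · rw [Fin.lt_iff_val_lt_val]; simpa using by omega
  rw [hidx, insPerm_succAbove]
  have h22 : k - 1 - 1 = k - 2 := by omega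
  simp [h22]

lemma sVal_ins_at (σ : Equiv.Perm (Fin n)) (j : Fin (n + 1)) :
    sVal (insPerm σ j) ((j : ℕ) + 1) = n + 1 := by
  have hj := j.is_le
  unfold sVal
  rw [dif_pos ⟨by omega, by omega⟩]
  have hidx : (⟨(j : ℕ) + 1 - 1, by omega⟩ : Fin (n + 1)) = j := by ext; simp
  rw [hidx, insPerm_at]
  simp

lemma sVal_ins_gt (σ : Equiv.Perm (Fin n)) (j : Fin (n + 1)) {k : ℕ}
    (h1 : (j : ℕ) + 2 ≤ k) (h2 : k ≤ n + 1) : sVal (insPerm σ j) k = sVal σ (k - 1) := by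
  have hkn' : k - 2 < n := by omega
  unfold sVal
  rw [dif_pos ⟨by omega, h2⟩, dif_pos ⟨by omega, by omega⟩]
  have hidx : (⟨k - 1, by omega⟩ : Fin (n + 1)) = j.succAbove ⟨k - 2, hkn'⟩ := by
    rw [Fin.succAbove_of_le_castSucc]
    · ext; simp; try omega
    · rw [Fin.le_iff_val_le_val]; simpa using by omega
  rw [hidx, insPerm_succAbove]
  have h22 : k - 1 - 1 = k - 2 := by omega
  simp [h22]

/-! ### descent set under insertion -/

def desInd {n r : ℕ} (w : ColoredPerm n r) (k : ℕ) : ℕ := if k ∈ desSet w then 1 else 0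

lemma mem_desSet {N r : ℕ} {w : ColoredPerm N r} {k : ℕ} :
    k ∈ desSet w ↔ (1 ≤ k ∧ k ≤ N) ∧ (eVal w.2 (k + 1) < eVal w.2 k ∨
      (eVal w.2 k = eVal w.2 (k + 1) ∧ sVal w.1 (k + 1) < sVal w.1 k)) := by
  simp [desSet, Finset.mem_filter, Finset.mem_Icc]

lemma card_desSet_eq_sum {N r : ℕ} (w : ColoredPerm N r) :
    (desSet w).card = ∑ k ∈ Ioc 0 N, desInd w k := by
  rw [desSet, Finset.card_filter]
  rw [show Finset.Icc 1 N = Finset.Ioc 0 N from Finset.Icc_add_one_left_eq_Ioc 0 N]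
  apply Finset.sum_congr rfl
  intro k hk
  simp only [desInd, desSet, Finset.mem_filter]
  rw [show Finset.Icc 1 N = Finset.Ioc 0 N from Finset.Icc_add_one_left_eq_Ioc 0 N]
  by_cases h : (eVal w.2 (k + 1) < eVal w.2 k ∨
      (eVal w.2 k = eVal w.2 (k + 1) ∧ sVal w.1 (k + 1) < sVal w.1 k)) <;> simp [h, hk]

section Star

variable (w' : ColoredPerm n r) (j : Fin (n + 1)) (c : Fin r)

lemma des_ins_D1 {k : ℕ} (h1 : 1 ≤ k) (h2 : k + 1 ≤ (j : ℕ)) :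
    (k ∈ desSet (insCP w' j c) ↔ k ∈ desSet w') := by
  have hj := j.is_le
  rw [mem_desSet, mem_desSet]
  simp only [insCP]
  rw [eVal_ins_lt _ _ _ (by omega), eVal_ins_lt _ _ _ (by omega),
    sVal_ins_lt _ _ h1 (by omega), sVal_ins_lt _ _ (by omega) h2]
  constructor
  · rintro ⟨hr, hp⟩; exact ⟨⟨h1, by omega⟩, hp⟩
  · rintro ⟨hr, hp⟩; exact ⟨⟨h1, by omega⟩, hp⟩

lemma des_ins_D2 {k : ℕ} (h1 : (j : ℕ) + 1 ≤ k) (h2 : k ≤ n) :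
    (k + 1 ∈ desSet (insCP w' j c) ↔ k ∈ desSet w') := by
  rw [mem_desSet, mem_desSet]
  simp only [insCP]
  rw [eVal_ins_gt _ _ _ (by omega : (j:ℕ) + 2 ≤ k + 1),
    sVal_ins_gt _ _ (by omega : (j:ℕ) + 2 ≤ k + 1) (by omega)]
  simp only [Nat.add_sub_cancel]
  rcases Nat.lt_or_ge k n with hk | hk
  · -- k + 2 ≤ n + 1 : in range
    rw [eVal_ins_gt _ _ _ (by omega : (j:ℕ) + 2 ≤ k + 2),
      sVal_ins_gt _ _ (by omega : (j:ℕ) + 2 ≤ k + 2) (by omega)]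
    simp only [show k + 2 - 1 = k + 1 from rfl]
    constructor
    · rintro ⟨hr, hp⟩; exact ⟨⟨by omega, by omega⟩, hp⟩
    · rintro ⟨hr, hp⟩; exact ⟨⟨by omega, by omega⟩, hp⟩
  · -- k = n : sentinel case
    have e1 : eVal (j.insertNth c w'.2) (k + 1 + 1) = 0 := by
      unfold eVal; rw [dif_neg (by omega)]
    have e2 : eVal w'.2 (k + 1) = 0 := by
      unfold eVal; rw [dif_neg (by omega)]
    have s1 : sVal (insPerm w'.1 j) (k + 1 + 1) = n + 2 := by
      unfold sVal; rw [dif_neg (by omega)]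
    have s2 : sVal w'.1 (k + 1) = n + 1 := by
      unfold sVal; rw [dif_neg (by omega)]
    rw [e1, e2, s1, s2]
    have b1 : sVal w'.1 k ≤ n := sVal_le_n _ (by omega) (by omega)
    constructor
    · rintro ⟨hr, hp⟩
      refine ⟨⟨by omega, by omega⟩, ?_⟩
      rcases hp with hp | ⟨hp1, hp2⟩
      · exact Or.inl hp
      · omega
    · rintro ⟨hr, hp⟩
      refine ⟨⟨by omega, by omega⟩, ?_⟩
      rcases hp with hp | ⟨hp1, hp2⟩
      · exact Or.inl hp
      · omega

lemma des_ins_D3 :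
    ((j : ℕ) + 1 ∈ desSet (insCP w' j c) ↔
      (if (j : ℕ) + 1 ≤ n then eVal w'.2 ((j : ℕ) + 1) ≤ (c : ℕ) else 0 < (c : ℕ))) := by
  have hj := j.is_le
  rw [mem_desSet]
  simp only [insCP]
  rw [eVal_ins_at, sVal_ins_at]
  rcases Nat.lt_or_ge (j : ℕ) n with hlt | hge
  · rw [if_pos (by omega)]
    rw [eVal_ins_gt _ _ _ (by omega : (j:ℕ) + 2 ≤ (j:ℕ) + 1 + 1),
      sVal_ins_gt _ _ (by omega : (j:ℕ) + 2 ≤ (j:ℕ) + 1 + 1) (by omega)]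
    simp only [Nat.add_sub_cancel]
    have b1 : sVal w'.1 ((j : ℕ) + 1) ≤ n := sVal_le_n _ (by omega) (by omega)
    constructor
    · rintro ⟨hr, hp⟩
      rcases hp with hp | ⟨hp1, hp2⟩ <;> omega
    · intro h
      refine ⟨⟨by omega, by omega⟩, ?_⟩
      rcases Nat.lt_or_ge (eVal w'.2 ((j:ℕ)+1)) (c:ℕ) with h2 | h2
      · exact Or.inl h2
      · exact Or.inr ⟨by omega, by omega⟩
  · have hje : (j : ℕ) = n := by omega
    rw [if_neg (by omega)]
    have e1 : eVal (j.insertNth c w'.2) ((j:ℕ) + 1 + 1) = 0 := by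
      unfold eVal; rw [dif_neg (by omega)]
    have s1 : sVal (insPerm w'.1 j) ((j:ℕ) + 1 + 1) = n + 2 := by
      unfold sVal; rw [dif_neg (by omega)]
    rw [e1, s1]
    constructor
    · rintro ⟨hr, hp⟩
      rcases hp with hp | ⟨hp1, hp2⟩ <;> omega
    · intro h
      exact ⟨⟨by omega, by omega⟩, Or.inl h⟩

lemma des_ins_D4 (hj : 1 ≤ (j : ℕ)) :
    ((j : ℕ) ∈ desSet (insCP w' j c) ↔ (c : ℕ) < eVal w'.2 (j : ℕ)) := by
  have hjn := j.is_le
  rw [mem_desSet]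
  simp only [insCP]
  have hjj : (j : ℕ) - 1 + 1 = (j : ℕ) := by omega
  rw [show (j:ℕ) + 1 = (j:ℕ) + 1 from rfl]
  rw [eVal_ins_at, sVal_ins_at, eVal_ins_lt _ _ _ le_rfl, sVal_ins_lt _ _ hj le_rfl]
  have b1 : sVal w'.1 (j : ℕ) ≤ n := sVal_le_n _ hj (by omega)
  constructor
  · rintro ⟨hr, hp⟩
    rcases hp with hp | ⟨hp1, hp2⟩ <;> omega
  · intro h
    exact ⟨⟨hj, by omega⟩, Or.inl h⟩

end Star

lemma sum_Ioc_shift (a b : ℕ) (f : ℕ → ℕ) :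
    ∑ k ∈ Ioc (a + 1) (b + 1), f k = ∑ k ∈ Ioc a b, f (k + 1) := by
  rw [← Finset.map_add_right_Ioc, Finset.sum_map]
  rfl

lemma Ioc_succ_singleton' (a : ℕ) : Ioc a (a + 1) = ({a + 1} : Finset ℕ) := by
  ext x; simp [Finset.mem_Ioc]; try omega

lemma Ioc_pred_singleton {a : ℕ} (h : 1 ≤ a) : Ioc (a - 1) a = ({a} : Finset ℕ) := by
  ext x; simp [Finset.mem_Ioc]; try omega

lemma star (w' : ColoredPerm n r) (j : Fin (n + 1)) (c : Fin r) :
    (desSet (insCP w' j c)).card + desInd w' (j : ℕ)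
      = (desSet w').card
        + (if (c : ℕ) < eVal w'.2 (j : ℕ) then 1 else 0)
        + (if (j : ℕ) + 1 ≤ n then (if eVal w'.2 ((j : ℕ) + 1) ≤ (c : ℕ) then 1 else 0)
            else (if 0 < (c : ℕ) then 1 else 0)) := by
  have hjle : (j : ℕ) ≤ n := j.is_le
  set χ : ℕ → ℕ := desInd (insCP w' j c) with hχ
  set χ' : ℕ → ℕ := desInd w' with hχ'
  have hD3 : χ ((j : ℕ) + 1) = (if (j : ℕ) + 1 ≤ n
      then (if eVal w'.2 ((j : ℕ) + 1) ≤ (c : ℕ) then 1 else 0)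
      else (if 0 < (c : ℕ) then 1 else 0)) := by
    have hd3 := des_ins_D3 w' j c
    by_cases h : (j : ℕ) + 1 ≤ n
    · rw [if_pos h] at hd3 ⊢
      simp only [hχ, desInd, hd3]
    · rw [if_neg h] at hd3 ⊢
      simp only [hχ, desInd, hd3]
  have sC : ∑ k ∈ Ioc (j : ℕ) ((j : ℕ) + 1), χ k + ∑ k ∈ Ioc ((j : ℕ) + 1) (n + 1), χ k
      = ∑ k ∈ Ioc (j : ℕ) (n + 1), χ k :=
    Finset.sum_Ioc_consecutive _ (by omega) (by omega)
  rw [Ioc_succ_singleton' (j : ℕ), Finset.sum_singleton] at sC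
  have shift : ∑ k ∈ Ioc ((j : ℕ) + 1) (n + 1), χ k = ∑ k ∈ Ioc (j : ℕ) n, χ (k + 1) :=
    sum_Ioc_shift (j : ℕ) n χ
  have shift2 : ∑ k ∈ Ioc (j : ℕ) n, χ (k + 1) = ∑ k ∈ Ioc (j : ℕ) n, χ' k := by
    apply Finset.sum_congr rfl
    intro k hk
    rw [Finset.mem_Ioc] at hk
    simp only [hχ, hχ', desInd]
    simp only [des_ins_D2 w' j c (k := k) (by omega) hk.2]
  rw [card_desSet_eq_sum, card_desSet_eq_sum, ← hχ, ← hχ']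
  rcases Nat.eq_zero_or_pos (j : ℕ) with hj0 | hj1
  · -- j = 0 case
    have e0 : χ' (j : ℕ) = 0 := by
      have : (j : ℕ) ∉ desSet w' := by
        rw [mem_desSet]; rintro ⟨⟨h, _⟩, _⟩; omega
      simp [hχ', desInd, this]
    have e0' : eVal w'.2 (j : ℕ) = 0 := by unfold eVal; rw [dif_neg (by omega)]
    have full1 : ∑ k ∈ Ioc (j : ℕ) (n + 1), χ k = ∑ k ∈ Ioc 0 (n + 1), χ k := by rw [hj0]
    have full2 : ∑ k ∈ Ioc (j : ℕ) n, χ' k = ∑ k ∈ Ioc 0 n, χ' k := by rw [hj0]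
    rw [e0', if_neg (by omega), e0]
    omega
  · -- j ≥ 1 case
    have hD4 : χ (j : ℕ) = (if (c : ℕ) < eVal w'.2 (j : ℕ) then 1 else 0) := by
      by_cases h : (c : ℕ) < eVal w'.2 (j : ℕ) <;>
        simp [hχ, desInd, des_ins_D4 w' j c hj1, h]
    have sA : ∑ k ∈ Ioc 0 ((j : ℕ) - 1), χ k + ∑ k ∈ Ioc ((j : ℕ) - 1) (n + 1), χ k
        = ∑ k ∈ Ioc 0 (n + 1), χ k := Finset.sum_Ioc_consecutive _ (by omega) (by omega)
    have sB : ∑ k ∈ Ioc ((j : ℕ) - 1) (j : ℕ), χ k + ∑ k ∈ Ioc (j : ℕ) (n + 1), χ k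
        = ∑ k ∈ Ioc ((j : ℕ) - 1) (n + 1), χ k :=
      Finset.sum_Ioc_consecutive _ (by omega) (by omega)
    rw [Ioc_pred_singleton hj1, Finset.sum_singleton] at sB
    have d1 : ∑ k ∈ Ioc 0 ((j : ℕ) - 1), χ k = ∑ k ∈ Ioc 0 ((j : ℕ) - 1), χ' k := by
      apply Finset.sum_congr rfl
      intro k hk
      rw [Finset.mem_Ioc] at hk
      simp only [hχ, hχ', desInd]
      simp only [des_ins_D1 w' j c (k := k) (by omega) (by omega)]
    have sA' : ∑ k ∈ Ioc 0 ((j : ℕ) - 1), χ' k + ∑ k ∈ Ioc ((j : ℕ) - 1) n, χ' k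
        = ∑ k ∈ Ioc 0 n, χ' k := Finset.sum_Ioc_consecutive _ (by omega) (by omega)
    have sB' : ∑ k ∈ Ioc ((j : ℕ) - 1) (j : ℕ), χ' k + ∑ k ∈ Ioc (j : ℕ) n, χ' k
        = ∑ k ∈ Ioc ((j : ℕ) - 1) n, χ' k :=
      Finset.sum_Ioc_consecutive _ (by omega) (by omega)
    rw [Ioc_pred_singleton hj1, Finset.sum_singleton] at sB'
    omega

/-! ### per-slot sums -/

def zN (w' : ColoredPerm n r) (jv : ℕ) : ℕ :=
  (if jv ∈ desSet w' then r + eVal w'.2 (jv + 1) - eVal w'.2 jv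
    else eVal w'.2 (jv + 1) - eVal w'.2 jv)
  + (if jv + 1 ≤ n then 0 else 1)

lemma sum_X_ite {d : ℕ} (Q : ℕ → Prop) [DecidablePred Q] (zc : ℕ)
    (hcard : ((range r).filter (fun cv => ¬ Q cv)).card = zc)
    (f : Fin r → ℕ) (hf : ∀ c : Fin r, f c = if Q (c : ℕ) then d + 1 else d) :
    ∑ c : Fin r, (X : ℤ[X]) ^ (f c)
      = (zc : ℤ[X]) * X ^ d + ((r : ℤ[X]) - (zc : ℤ[X])) * X ^ (d + 1) := by
  have h1 : ∑ c : Fin r, (X : ℤ[X]) ^ (f c)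
      = ∑ cv ∈ range r, (if Q cv then (X : ℤ[X]) ^ (d + 1) else X ^ d) := by
    rw [← Fin.sum_univ_eq_sum_range (fun cv => if Q cv then (X : ℤ[X]) ^ (d + 1) else X ^ d) r]
    exact Finset.sum_congr rfl fun c _ => by
      rw [hf c]; exact apply_ite (fun e => (X : ℤ[X]) ^ e) _ _ _
  have hQcard : ((range r).filter Q).card = r - zc := by
    have h2 := Finset.card_filter_add_card_filter_not (s := range r) (p := Q)
    rw [Finset.card_range, hcard] at h2
    omega
  have hzr : zc ≤ r := by
    rw [← hcard]
    calc ((range r).filter (fun cv => ¬ Q cv)).card ≤ (range r).card :=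
          Finset.card_filter_le _ _
      _ = r := Finset.card_range r
  rw [h1, Finset.sum_ite, Finset.sum_const, Finset.sum_const, hcard, hQcard,
    nsmul_eq_mul, nsmul_eq_mul]
  have : ((r - zc : ℕ) : ℤ[X]) = (r : ℤ[X]) - (zc : ℤ[X]) := by
    push_cast [Nat.cast_sub hzr]; ring
  rw [this]; ring

lemma fact_desc {w' : ColoredPerm n r} {jv : ℕ} (h : jv ∈ desSet w') :
    eVal w'.2 (jv + 1) ≤ eVal w'.2 jv := by
  rw [mem_desSet] at h
  rcases h.2 with h2 | ⟨h2, _⟩ <;> omega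

lemma fact_asc {w' : ColoredPerm n r} {jv : ℕ} (h : jv ∉ desSet w') :
    eVal w'.2 jv ≤ eVal w'.2 (jv + 1) := by
  rcases Nat.lt_or_ge jv 1 with hj | hj
  · interval_cases jv
    unfold eVal; rw [dif_neg (by omega)]; omega
  rcases Nat.lt_or_ge n jv with hn | hn
  · have : eVal w'.2 jv = 0 := by unfold eVal; rw [dif_neg (by omega)]
    omega
  rw [mem_desSet] at h
  push_neg at h
  have := h ⟨hj, hn⟩
  omega

lemma fact_last_desc {w' : ColoredPerm n r} {jv : ℕ} (h : jv ∈ desSet w')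
    (hJ : ¬ (jv + 1 ≤ n)) : 1 ≤ eVal w'.2 jv ∧ eVal w'.2 (jv + 1) = 0 := by
  have hb : eVal w'.2 (jv + 1) = 0 := by unfold eVal; rw [dif_neg (by omega)]
  rw [mem_desSet] at h
  obtain ⟨⟨hj1, hjn⟩, hp⟩ := h
  have hs : sVal w'.1 (jv + 1) = n + 1 := by unfold sVal; rw [dif_neg (by omega)]
  have hs2 : sVal w'.1 jv ≤ n := sVal_le_n _ hj1 hjn
  rcases hp with h2 | ⟨h2, h3⟩ <;> omega

lemma slot_sum (hr : 0 < r) (w' : ColoredPerm n r) (j : Fin (n + 1)) :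
    ∑ c : Fin r, (X : ℤ[X]) ^ ((desSet (insCP w' j c)).card)
      = (zN w' (j : ℕ) : ℤ[X]) * X ^ (desSet w').card
        + ((r : ℤ[X]) - (zN w' (j : ℕ) : ℤ[X])) * X ^ ((desSet w').card + 1) := by
  have har : eVal w'.2 (j : ℕ) < r := eVal_lt_r _ _ hr
  have hbr : eVal w'.2 ((j : ℕ) + 1) < r := eVal_lt_r _ _ hr
  by_cases hu : (j : ℕ) ∈ desSet w' <;> by_cases hJ : (j : ℕ) + 1 ≤ n
  · -- descent slot, interior
    have hba : eVal w'.2 ((j : ℕ) + 1) ≤ eVal w'.2 (j : ℕ) := fact_desc hu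
    have hzn : zN w' (j : ℕ) = r + eVal w'.2 ((j : ℕ) + 1) - eVal w'.2 (j : ℕ) := by
      simp [zN, hu, hJ]
    rw [hzn]
    apply sum_X_ite
      (Q := fun cv => eVal w'.2 ((j : ℕ) + 1) ≤ cv ∧ cv < eVal w'.2 (j : ℕ))
    · have he : ((range r).filter
          (fun cv => ¬ (eVal w'.2 ((j : ℕ) + 1) ≤ cv ∧ cv < eVal w'.2 (j : ℕ))))
          = range (eVal w'.2 ((j : ℕ) + 1)) ∪ Ico (eVal w'.2 (j : ℕ)) r := by
        ext x; simp only [Finset.mem_filter, Finset.mem_range, Finset.mem_union,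
          Finset.mem_Ico]; omega
      rw [he, Finset.card_union_of_disjoint, Finset.card_range, Nat.card_Ico]
      · omega
      · rw [Finset.disjoint_left]
        intro x hx hx2
        simp only [Finset.mem_range, Finset.mem_Ico] at hx hx2
        omega
    · intro c
      have hs := star w' j c
      rw [if_pos hJ] at hs
      simp only [desInd, if_pos hu] at hs
      by_cases h1 : (c : ℕ) < eVal w'.2 (j : ℕ) <;>
        by_cases h2 : eVal w'.2 ((j : ℕ) + 1) ≤ (c : ℕ)
      · rw [if_pos h1, if_pos h2] at hs; rw [if_pos ⟨h2, h1⟩]; omega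
      · rw [if_pos h1, if_neg h2] at hs; rw [if_neg (by tauto)]; omega
      · rw [if_neg h1, if_pos h2] at hs; rw [if_neg (by tauto)]; omega
      · rw [if_neg h1, if_neg h2] at hs; rw [if_neg (by tauto)]; omega
  · -- descent slot, last
    obtain ⟨ha1, hb0⟩ := fact_last_desc hu hJ
    have hzn : zN w' (j : ℕ) = r + eVal w'.2 ((j : ℕ) + 1) - eVal w'.2 (j : ℕ) + 1 := by
      simp [zN, hu, hJ]
    rw [hzn]
    apply sum_X_ite (Q := fun cv => 0 < cv ∧ cv < eVal w'.2 (j : ℕ))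
    · have he : ((range r).filter (fun cv => ¬ (0 < cv ∧ cv < eVal w'.2 (j : ℕ))))
          = {0} ∪ Ico (eVal w'.2 (j : ℕ)) r := by
        ext x; simp only [Finset.mem_filter, Finset.mem_range, Finset.mem_union,
          Finset.mem_singleton, Finset.mem_Ico]; omega
      rw [he, Finset.card_union_of_disjoint, Finset.card_singleton, Nat.card_Ico]
      · omega
      · rw [Finset.disjoint_left]
        intro x hx hx2
        simp only [Finset.mem_singleton, Finset.mem_Ico] at hx hx2
        omega
    · intro c
      have hs := star w' j c
      rw [if_neg hJ] at hs
      simp only [desInd, if_pos hu] at hs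
      by_cases h1 : (c : ℕ) < eVal w'.2 (j : ℕ) <;> by_cases h2 : 0 < (c : ℕ)
      · rw [if_pos h1, if_pos h2] at hs; rw [if_pos ⟨h2, h1⟩]; omega
      · rw [if_pos h1, if_neg h2] at hs; rw [if_neg (by tauto)]; omega
      · rw [if_neg h1, if_pos h2] at hs; rw [if_neg (by tauto)]; omega
      · rw [if_neg h1, if_neg h2] at hs; rw [if_neg (by tauto)]; omega
  · -- ascent slot, interior
    have hab : eVal w'.2 (j : ℕ) ≤ eVal w'.2 ((j : ℕ) + 1) := fact_asc hu
    have hzn : zN w' (j : ℕ) = eVal w'.2 ((j : ℕ) + 1) - eVal w'.2 (j : ℕ) := by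
      simp [zN, hu, hJ]
    rw [hzn]
    apply sum_X_ite
      (Q := fun cv => cv < eVal w'.2 (j : ℕ) ∨ eVal w'.2 ((j : ℕ) + 1) ≤ cv)
    · have he : ((range r).filter
          (fun cv => ¬ (cv < eVal w'.2 (j : ℕ) ∨ eVal w'.2 ((j : ℕ) + 1) ≤ cv)))
          = Ico (eVal w'.2 (j : ℕ)) (eVal w'.2 ((j : ℕ) + 1)) := by
        ext x; simp only [Finset.mem_filter, Finset.mem_range, Finset.mem_Ico]; omega
      rw [he, Nat.card_Ico]
    · intro c
      have hs := star w' j c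
      rw [if_pos hJ] at hs
      simp only [desInd, if_neg hu] at hs
      by_cases h1 : (c : ℕ) < eVal w'.2 (j : ℕ) <;>
        by_cases h2 : eVal w'.2 ((j : ℕ) + 1) ≤ (c : ℕ)
      · rw [if_pos h1, if_pos h2] at hs; rw [if_pos (Or.inl h1)]; omega
      · rw [if_pos h1, if_neg h2] at hs; rw [if_pos (Or.inl h1)]; omega
      · rw [if_neg h1, if_pos h2] at hs; rw [if_pos (Or.inr h2)]; omega
      · rw [if_neg h1, if_neg h2] at hs; rw [if_neg (by tauto)]; omega
  · -- ascent slot, last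
    have hb0 : eVal w'.2 ((j : ℕ) + 1) = 0 := by
      unfold eVal; rw [dif_neg (by omega)]
    have ha0 : eVal w'.2 (j : ℕ) = 0 := by
      have := fact_asc hu
      omega
    have hzn : zN w' (j : ℕ) = 1 := by
      simp [zN, hu, hJ, hb0]
    rw [hzn]
    apply sum_X_ite (Q := fun cv => 0 < cv)
    · have he : ((range r).filter (fun cv => ¬ (0 < cv))) = {0} := by
        ext x; simp only [Finset.mem_filter, Finset.mem_range, Finset.mem_singleton]
        omega
      rw [he, Finset.card_singleton]
    · intro c
      have hs := star w' j c
      rw [if_neg hJ] at hs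
      simp only [desInd, if_neg hu, ha0] at hs
      rw [if_neg (by omega : ¬ ((c : ℕ) < 0))] at hs
      by_cases h2 : 0 < (c : ℕ)
      · rw [if_pos h2] at hs; rw [if_pos h2]; omega
      · rw [if_neg h2] at hs; rw [if_neg h2]; omega

lemma zN_cast (hr : 0 < r) (w' : ColoredPerm n r) (jv : ℕ) :
    (zN w' jv : ℤ) = (eVal w'.2 (jv + 1) : ℤ) - (eVal w'.2 jv : ℤ)
      + r * (desInd w' jv : ℤ) + (if jv + 1 ≤ n then 0 else 1) := by
  have har : eVal w'.2 jv < r := eVal_lt_r _ _ hr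
  by_cases hu : jv ∈ desSet w' <;> by_cases hJ : jv + 1 ≤ n
  · have hba := fact_desc hu
    simp only [zN, desInd, if_pos hu, if_pos hJ]
    omega
  · have hba := fact_desc hu
    simp only [zN, desInd, if_pos hu, if_neg hJ]
    omega
  · have hab := fact_asc hu
    simp only [zN, desInd, if_neg hu, if_pos hJ]
    omega
  · have hab := fact_asc hu
    simp only [zN, desInd, if_neg hu, if_neg hJ]
    omega

lemma sum_desInd (w' : ColoredPerm n r) :
    ∑ jv ∈ range (n + 1), desInd w' jv = (desSet w').card := by
  rw [card_desSet_eq_sum]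
  rw [show range (n + 1) = insert 0 (Ioc 0 n) from by ext x; simp]
  rw [Finset.sum_insert (by simp)]
  have : desInd w' 0 = 0 := by
    have : (0 : ℕ) ∉ desSet w' := by
      rw [mem_desSet]; rintro ⟨⟨h, _⟩, _⟩; omega
    simp [desInd, this]
  rw [this, zero_add]

lemma zN_sum (hr : 0 < r) (w' : ColoredPerm n r) :
    ∑ jv ∈ range (n + 1), zN w' jv = 1 + r * (desSet w').card := by
  have : ((∑ jv ∈ range (n + 1), zN w' jv : ℕ) : ℤ)
      = ((1 + r * (desSet w').card : ℕ) : ℤ) := by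
    push_cast
    rw [Finset.sum_congr rfl (fun jv _ => zN_cast hr w' jv)]
    rw [Finset.sum_add_distrib, Finset.sum_add_distrib]
    have t1 : ∑ jv ∈ range (n + 1),
        ((eVal w'.2 (jv + 1) : ℤ) - (eVal w'.2 jv : ℤ)) = 0 := by
      rw [Finset.sum_range_sub (fun jv => (eVal w'.2 jv : ℤ))]
      have e1 : eVal w'.2 (n + 1) = 0 := by unfold eVal; rw [dif_neg (by omega)]
      have e2 : eVal w'.2 0 = 0 := by unfold eVal; rw [dif_neg (by omega)]
      rw [e1, e2]; simp
    have t2 : ∑ jv ∈ range (n + 1), ((r : ℤ) * (desInd w' jv : ℤ))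
        = r * (desSet w').card := by
      rw [← Finset.mul_sum]
      congr 1
      rw [← Nat.cast_sum, sum_desInd]
    have t3 : ∑ jv ∈ range (n + 1), (if jv + 1 ≤ n then (0 : ℤ) else 1) = 1 := by
      rw [Finset.sum_range_succ]
      rw [Finset.sum_eq_zero (fun jv hj => by
        rw [Finset.mem_range] at hj; rw [if_pos (by omega)]), if_neg (by omega)]
      simp
    rw [t1, t2, t3]
    ring
  exact_mod_cast this

lemma fiber_sum (hr : 0 < r) (w' : ColoredPerm n r) :
    ∑ j : Fin (n + 1), ∑ c : Fin r, (X : ℤ[X]) ^ ((desSet (insCP w' j c)).card)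
      = (1 + (r : ℤ[X]) * ((desSet w').card : ℤ[X])) * X ^ (desSet w').card
        + (((n : ℤ[X]) + 1) * (r : ℤ[X]) - 1 - (r : ℤ[X]) * ((desSet w').card : ℤ[X]))
          * X ^ ((desSet w').card + 1) := by
  rw [Finset.sum_congr rfl (fun j _ => slot_sum hr w' j)]
  rw [Finset.sum_add_distrib, ← Finset.sum_mul, ← Finset.sum_mul]
  have hz : ∑ j : Fin (n + 1), (zN w' (j : ℕ) : ℤ[X])
      = 1 + (r : ℤ[X]) * ((desSet w').card : ℤ[X]) := by
    rw [Fin.sum_univ_eq_sum_range (fun jv => (zN w' jv : ℤ[X])) (n + 1)]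
    rw [← Nat.cast_sum, zN_sum hr w']
    push_cast
    ring
  have hz2 : ∑ j : Fin (n + 1), ((r : ℤ[X]) - (zN w' (j : ℕ) : ℤ[X]))
      = ((n : ℤ[X]) + 1) * (r : ℤ[X]) - 1 - (r : ℤ[X]) * ((desSet w').card : ℤ[X]) := by
    rw [Finset.sum_sub_distrib, hz, Finset.sum_const]
    simp only [Finset.card_univ, Fintype.card_fin, nsmul_eq_mul]
    push_cast
    ring
  rw [hz, hz2]

lemma colEulerian_succ (hr : 0 < r) (n : ℕ) :
    colEulerian (n + 1) r
      = (1 + (((n : ℤ[X]) + 1) * (r : ℤ[X]) - 1) * X) * colEulerian n r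
        + (r : ℤ[X]) * X * (1 - X) * derivative (colEulerian n r) := by
  have hbij := Fintype.sum_bijective _ (insCP_bijective (n := n) (r := r))
    (fun p => (X : ℤ[X]) ^ (desSet (insCP p.1.1 p.1.2 p.2)).card)
    (fun w => (X : ℤ[X]) ^ (desSet w).card)
    (fun p => rfl)
  rw [colEulerian, ← hbij]
  rw [Fintype.sum_prod_type, Fintype.sum_prod_type]
  rw [Finset.sum_congr rfl (fun w' _ => fiber_sum hr w')]
  rw [colEulerian, derivative_sum]
  rw [Finset.mul_sum, Finset.mul_sum, ← Finset.sum_add_distrib]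
  apply Finset.sum_congr rfl
  intro w' _
  rw [derivative_X_pow]
  cases hd : (desSet w').card with
  | zero => simp
  | succ e =>
    simp only [map_natCast, Nat.add_sub_cancel]
    push_cast
    ring

/-! ### recurrence for the colored binomial Eulerian polynomial -/

noncomputable def Upoly (r m : ℕ) : ℤ[X] :=
  ∑ k ∈ range (m + 1), (m.choose k : ℤ[X]) * X ^ (m - k) * colEulerian (k + 1) r

noncomputable def S1p (r m : ℕ) : ℤ[X] :=
  ∑ k ∈ range (m + 1), ((k * m.choose k : ℕ) : ℤ[X]) * X ^ (m - k) * colEulerian k r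

noncomputable def SEp (r m : ℕ) : ℤ[X] :=
  ∑ k ∈ range (m + 1),
    (m.choose k : ℤ[X]) * ((m - k : ℕ) : ℤ[X]) * X ^ (m - k - 1) * colEulerian k r

noncomputable def SDp (r m : ℕ) : ℤ[X] :=
  ∑ k ∈ range (m + 1), (m.choose k : ℤ[X]) * X ^ (m - k) * derivative (colEulerian k r)

lemma At_split (r m : ℕ) :
    colBinomEulerian (m + 1) r = X * colBinomEulerian m r + Upoly r m := by
  rw [colBinomEulerian, Finset.sum_range_succ' _ (m + 1)]
  have h1 : ∀ i ∈ range (m + 1),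
      ((m + 1).choose (i + 1) : ℤ[X]) * X ^ (m + 1 - (i + 1)) * colEulerian (i + 1) r
      = (m.choose i : ℤ[X]) * X ^ (m - i) * colEulerian (i + 1) r
        + (m.choose (i + 1) : ℤ[X]) * X ^ (m - i) * colEulerian (i + 1) r := by
    intro i _
    rw [Nat.choose_succ_succ, Nat.succ_sub_succ]
    push_cast
    ring
  rw [Finset.sum_congr rfl h1, Finset.sum_add_distrib]
  have h2 : X * colBinomEulerian m r
      = ∑ i ∈ range (m + 1), (m.choose (i + 1) : ℤ[X]) * X ^ (m - i) * colEulerian (i + 1) r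
        + ((m + 1).choose 0 : ℤ[X]) * X ^ (m + 1 - 0) * colEulerian 0 r := by
    rw [colBinomEulerian, Finset.mul_sum, Finset.sum_range_succ' _ m]
    have h3 : ∀ j ∈ range m,
        X * ((m.choose (j + 1) : ℤ[X]) * X ^ (m - (j + 1)) * colEulerian (j + 1) r)
        = (m.choose (j + 1) : ℤ[X]) * X ^ (m - j) * colEulerian (j + 1) r := by
      intro j hj
      rw [Finset.mem_range] at hj
      have he : m - j = (m - (j + 1)) + 1 := by omega
      rw [he, pow_succ]
      ring
    rw [Finset.sum_congr rfl h3]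
    have h4 : ∑ i ∈ range (m + 1),
        (m.choose (i + 1) : ℤ[X]) * X ^ (m - i) * colEulerian (i + 1) r
        = ∑ i ∈ range m, (m.choose (i + 1) : ℤ[X]) * X ^ (m - i) * colEulerian (i + 1) r := by
      rw [Finset.sum_range_succ, Nat.choose_succ_self]
      simp
    rw [h4]
    have h5 : X * ((m.choose 0 : ℤ[X]) * X ^ (m - 0) * colEulerian 0 r)
        = ((m + 1).choose 0 : ℤ[X]) * X ^ (m + 1 - 0) * colEulerian 0 r := by
      simp only [Nat.choose_zero_right, Nat.sub_zero, Nat.cast_one, one_mul]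
      rw [pow_succ]
      ring
    rw [h5]
  rw [h2, Upoly]
  ring

lemma der_split (r m : ℕ) :
    derivative (colBinomEulerian m r) = SEp r m + SDp r m := by
  rw [colBinomEulerian, derivative_sum]
  rw [SEp, SDp, ← Finset.sum_add_distrib]
  apply Finset.sum_congr rfl
  intro k _
  rw [derivative_mul, derivative_mul, derivative_natCast, derivative_X_pow]
  simp only [map_natCast]
  push_cast
  ring

lemma XSE (r m : ℕ) :
    X * SEp r m = (m : ℤ[X]) * colBinomEulerian m r - S1p r m := by
  rw [SEp, colBinomEulerian, S1p, Finset.mul_sum, Finset.mul_sum, ← Finset.sum_sub_distrib]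
  apply Finset.sum_congr rfl
  intro k hk
  rw [Finset.mem_range] at hk
  have hkm : k ≤ m := by omega
  have hc : ((m - k : ℕ) : ℤ[X]) = (m : ℤ[X]) - (k : ℤ[X]) := by
    push_cast [Nat.cast_sub hkm]; ring
  rcases eq_or_lt_of_le hkm with he | hlt
  · subst he
    simp only [Nat.sub_self]
    push_cast
    ring
  · have he : m - k = (m - k - 1) + 1 := by omega
    rw [hc]
    conv_rhs => rw [he]
    rw [pow_succ]
    push_cast
    ring

lemma S1_eq (r m : ℕ) :
    S1p r (m + 1) = ((m : ℤ[X]) + 1) * Upoly r m := by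
  rw [S1p, Finset.sum_range_succ' _ (m + 1)]
  simp only [Nat.zero_mul, Nat.cast_zero, zero_mul, add_zero, Nat.cast_ofNat]
  have h1 : ∀ i ∈ range (m + 1),
      (((i + 1) * (m + 1).choose (i + 1) : ℕ) : ℤ[X]) * X ^ (m + 1 - (i + 1))
        * colEulerian (i + 1) r
      = ((m : ℤ[X]) + 1) * ((m.choose i : ℤ[X]) * X ^ (m - i) * colEulerian (i + 1) r) := by
    intro i _
    have hch : (i + 1) * (m + 1).choose (i + 1) = (m + 1) * m.choose i := by
      rw [mul_comm (i + 1) _, ← Nat.add_one_mul_choose_eq]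
    rw [hch, Nat.succ_sub_succ]
    push_cast
    try ring
  rw [Finset.sum_congr rfl h1, ← Finset.mul_sum, Upoly]

lemma U_expand (hr : 0 < r) (m : ℕ) :
    Upoly r (m + 1)
      = colBinomEulerian (m + 1) r
        + ((r : ℤ[X]) - 1) * X * colBinomEulerian (m + 1) r
        + (r : ℤ[X]) * X * S1p r (m + 1)
        + (r : ℤ[X]) * X * (1 - X) * SDp r (m + 1) := by
  rw [colBinomEulerian, S1p, SDp, Upoly]
  simp only [Finset.mul_sum]
  rw [← Finset.sum_add_distrib, ← Finset.sum_add_distrib, ← Finset.sum_add_distrib]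
  apply Finset.sum_congr rfl
  intro k _
  rw [colEulerian_succ hr k]
  push_cast
  ring

lemma colBinom_rec (hr : 0 < r) (m : ℕ) :
    colBinomEulerian (m + 2) r
      = (1 + (r : ℤ[X]) * ((m : ℤ[X]) + 2) * X) * colBinomEulerian (m + 1) r
        + (r : ℤ[X]) * X * (1 - X) * derivative (colBinomEulerian (m + 1) r)
        - (r : ℤ[X]) * ((m : ℤ[X]) + 1) * X * colBinomEulerian m r := by
  have hsplit2 : colBinomEulerian (m + 2) r
      = X * colBinomEulerian (m + 1) r + Upoly r (m + 1) := At_split r (m + 1)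
  have hU : Upoly r m = colBinomEulerian (m + 1) r - X * colBinomEulerian m r := by
    rw [At_split r m]; ring
  have hS1 : S1p r (m + 1) = ((m : ℤ[X]) + 1) * Upoly r m := S1_eq r m
  have hXSE : X * SEp r (m + 1)
      = ((m : ℤ[X]) + 1) * colBinomEulerian (m + 1) r - S1p r (m + 1) := by
    rw [XSE r (m + 1)]
    push_cast
    ring
  have hder : derivative (colBinomEulerian (m + 1) r) = SEp r (m + 1) + SDp r (m + 1) :=
    der_split r (m + 1)
  have hexp := U_expand hr m
  rw [hsplit2, hexp]
  linear_combination (- (r : ℤ[X]) * (1 - X)) * hXSE + (r : ℤ[X]) * hS1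
    + ((r : ℤ[X]) * ((m : ℤ[X]) + 1)) * hU - ((r : ℤ[X]) * X * (1 - X)) * hder

/-! ### the gamma vectors -/

mutual
  def Pg (r : ℕ) : ℕ → ℕ → ℤ
    | 0, 0 => 1
    | 0, _ + 1 => 0
    | 1, 0 => 1
    | 1, _ + 1 => 0
    | n + 2, 0 => Pg r (n + 1) 0 + Mg r (n + 1) 0
    | n + 2, i + 1 =>
        (1 + (r : ℤ) * ((i : ℤ) + 1)) * Pg r (n + 1) (i + 1)
          + 2 * (r : ℤ) * ((n : ℤ) + 1 - 2 * (i : ℤ)) * Pg r (n + 1) i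
          + Mg r (n + 1) (i + 1) - (r : ℤ) * ((n : ℤ) + 1) * Pg r n i
  def Mg (r : ℕ) : ℕ → ℕ → ℤ
    | _, 0 => 0
    | 0, _ + 1 => 0
    | 1, 1 => (r : ℤ) - 1
    | 1, _ + 2 => 0
    | n + 2, i + 1 =>
        ((r : ℤ) - 1) * Pg r (n + 1) i + (r : ℤ) * ((i : ℤ) + 1) * Mg r (n + 1) (i + 1)
          + 2 * (r : ℤ) * ((n : ℤ) + 2 - 2 * (i : ℤ)) * Mg r (n + 1) i
          - (r : ℤ) * ((n : ℤ) + 1) * Mg r n i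
end

lemma Pg_Mg_support (r : ℕ) :
    ∀ n, (∀ i, n < 2 * i → Pg r n i = 0) ∧ (∀ i, n + 1 < 2 * i → Mg r n i = 0) := by
  intro n
  induction n using Nat.strong_induction_on with
  | _ n ih =>
    match n with
    | 0 =>
      constructor
      · rintro (_ | i) h
        · omega
        · rfl
      · rintro (_ | i) h
        · rfl
        · rfl
    | 1 =>
      constructor
      · rintro (_ | i) h
        · omega
        · rfl
      · rintro (_ | (_ | i)) h
        · rfl
        · omega
        · rfl
    | (m + 2) =>
      obtain ⟨ihP1, ihM1⟩ := ih (m + 1) (by omega)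
      obtain ⟨ihP0, ihM0⟩ := ih m (by omega)
      constructor
      · rintro (_ | i) h
        · omega
        · show (1 + (r : ℤ) * ((i : ℤ) + 1)) * Pg r (m + 1) (i + 1)
              + 2 * (r : ℤ) * ((m : ℤ) + 1 - 2 * (i : ℤ)) * Pg r (m + 1) i
              + Mg r (m + 1) (i + 1) - (r : ℤ) * ((m : ℤ) + 1) * Pg r m i = 0
          rw [ihP1 (i + 1) (by omega), ihM1 (i + 1) (by omega), ihP0 i (by omega)]
          rcases Nat.lt_or_ge (m + 1) (2 * i) with h2 | h2
          · rw [ihP1 i h2]; ring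
          · have : 2 * i = m + 1 := by omega
            have he : ((m : ℤ) + 1 - 2 * (i : ℤ)) = 0 := by
              have : (2 * i : ℤ) = (m : ℤ) + 1 := by exact_mod_cast this
              push_cast at this ⊢
              omega
            rw [he]; ring
      · rintro (_ | i) h
        · rfl
        · show ((r : ℤ) - 1) * Pg r (m + 1) i + (r : ℤ) * ((i : ℤ) + 1) * Mg r (m + 1) (i + 1)
              + 2 * (r : ℤ) * ((m : ℤ) + 2 - 2 * (i : ℤ)) * Mg r (m + 1) i
              - (r : ℤ) * ((m : ℤ) + 1) * Mg r m i = 0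
          rw [ihP1 i (by omega), ihM1 (i + 1) (by omega), ihM0 i (by omega)]
          rcases Nat.lt_or_ge (m + 2) (2 * i) with h2 | h2
          · rw [ihM1 i h2]; ring
          · have : 2 * i = m + 2 := by omega
            have he : ((m : ℤ) + 2 - 2 * (i : ℤ)) = 0 := by
              have : (2 * i : ℤ) = (m : ℤ) + 2 := by exact_mod_cast this
              push_cast at this ⊢
              omega
            rw [he]; ring

lemma Pg_support {r n i : ℕ} (h : n < 2 * i) : Pg r n i = 0 := (Pg_Mg_support r n).1 i h
lemma Mg_support {r n i : ℕ} (h : n + 1 < 2 * i) : Mg r n i = 0 := (Pg_Mg_support r n).2 i h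
lemma Mg_zero (r n : ℕ) : Mg r n 0 = 0 := by
  match n with
  | 0 => rfl
  | 1 => rfl
  | _ + 2 => rfl

lemma Pg_Mg_pos (r : ℕ) (hr : 2 ≤ r) :
    ∀ n, (∀ i, 0 ≤ Pg r n i) ∧ (∀ i, 0 ≤ Mg r n i)
      ∧ (∀ i, 2 * i + 1 ≤ n →
          (n : ℤ) * Pg r (n - 1) i ≤ 2 * ((n : ℤ) - 2 * i) * Pg r n i)
      ∧ (∀ i, 1 ≤ i → 2 * i ≤ n →
          (n : ℤ) * Mg r (n - 1) i ≤ 2 * ((n : ℤ) + 1 - 2 * i) * Mg r n i) := by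
  have hrz : (2 : ℤ) ≤ (r : ℤ) := by exact_mod_cast hr
  intro n
  induction n using Nat.strong_induction_on with
  | _ n ih =>
    match n with
    | 0 =>
      refine ⟨?_, ?_, ?_, ?_⟩
      · rintro (_ | i) <;> simp [Pg]
      · rintro (_ | i) <;> simp [Mg]
      · intro i h; omega
      · intro i h1 h2; omega
    | 1 =>
      refine ⟨?_, ?_, ?_, ?_⟩
      · rintro (_ | i) <;> simp [Pg]
      · rintro (_ | (_ | i)) <;> simp [Mg] <;> omega
      · intro i h
        have hi : i = 0 := by omega
        subst hi
        show (1 : ℤ) * Pg r 0 0 ≤ 2 * ((1 : ℤ) - 2 * 0) * Pg r 1 0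
        show (1 : ℤ) * 1 ≤ 2 * ((1 : ℤ) - 2 * 0) * 1
        norm_num
      · intro i h1 h2; omega
    | (m + 2) =>
      obtain ⟨ihP1, ihM1, ihH1, ihG1⟩ := ih (m + 1) (by omega)
      obtain ⟨ihP0, ihM0, _, _⟩ := ih m (by omega)
      -- key inequality for the P recurrence
      have keyP : ∀ i : ℕ, (r : ℤ) * ((m : ℤ) + 1) * Pg r m i
          ≤ 2 * (r : ℤ) * ((m : ℤ) + 1 - 2 * (i : ℤ)) * Pg r (m + 1) i := by
        intro i
        rcases Nat.lt_or_ge (2 * i + 1) (m + 2) with hc | hc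
        · -- 2i ≤ m : use H at level m+1
          have hH := ihH1 i (by omega)
          simp only [Nat.add_sub_cancel] at hH
          have : ((m : ℤ) + 1) = ((m + 1 : ℕ) : ℤ) := by push_cast; ring
          calc (r : ℤ) * ((m : ℤ) + 1) * Pg r m i
              = (r : ℤ) * (((m + 1 : ℕ) : ℤ) * Pg r m i) := by push_cast; ring
            _ ≤ (r : ℤ) * (2 * (((m + 1 : ℕ) : ℤ) - 2 * i) * Pg r (m + 1) i) := by
                apply mul_le_mul_of_nonneg_left _ (by omega)
                exact_mod_cast hH
            _ = 2 * (r : ℤ) * ((m : ℤ) + 1 - 2 * (i : ℤ)) * Pg r (m + 1) i := by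
                push_cast; ring
        · -- 2i ≥ m+1
          have hP0 : Pg r m i = 0 := Pg_support (by omega)
          rw [hP0, mul_zero]
          rcases Nat.lt_or_ge (m + 1) (2 * i) with h2 | h2
          · rw [Pg_support (r := r) h2, mul_zero]
          · have h2i : 2 * i = m + 1 := by omega
            have he : ((m : ℤ) + 1 - 2 * (i : ℤ)) = 0 := by
              have : (2 * i : ℤ) = (m : ℤ) + 1 := by exact_mod_cast h2i
              omega
            rw [he]; simp
      have keyM : ∀ i : ℕ, (r : ℤ) * ((m : ℤ) + 1) * Mg r m i
          ≤ 2 * (r : ℤ) * ((m : ℤ) + 2 - 2 * (i : ℤ)) * Mg r (m + 1) i := by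
        intro i
        rcases Nat.eq_zero_or_pos i with hi0 | hi1
        · subst hi0
          rw [Mg_zero, Mg_zero]
          simp
        rcases Nat.lt_or_ge (2 * i) (m + 2) with hc | hc
        · -- 2i ≤ m+1 : use G at level m+1
          have hG := ihG1 i hi1 (by omega)
          simp only [Nat.add_sub_cancel] at hG
          calc (r : ℤ) * ((m : ℤ) + 1) * Mg r m i
              = (r : ℤ) * (((m + 1 : ℕ) : ℤ) * Mg r m i) := by push_cast; ring
            _ ≤ (r : ℤ) * (2 * (((m + 1 : ℕ) : ℤ) + 1 - 2 * i) * Mg r (m + 1) i) := by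
                apply mul_le_mul_of_nonneg_left _ (by omega)
                exact_mod_cast hG
            _ = 2 * (r : ℤ) * ((m : ℤ) + 2 - 2 * (i : ℤ)) * Mg r (m + 1) i := by
                push_cast; ring
        · have hM0 : Mg r m i = 0 := Mg_support (by omega)
          rw [hM0, mul_zero]
          rcases Nat.lt_or_ge (m + 2) (2 * i) with h2 | h2
          · rw [Mg_support (r := r) h2, mul_zero]
          · have h2i : 2 * i = m + 2 := by omega
            have he : ((m : ℤ) + 2 - 2 * (i : ℤ)) = 0 := by
              have : (2 * i : ℤ) = (m : ℤ) + 2 := by exact_mod_cast h2i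
              omega
            rw [he]; simp
      have hPpos : ∀ i, 0 ≤ Pg r (m + 2) i := by
        rintro (_ | i)
        · show 0 ≤ Pg r (m + 1) 0 + Mg r (m + 1) 0
          have := ihP1 0; have := ihM1 0; omega
        · show 0 ≤ (1 + (r : ℤ) * ((i : ℤ) + 1)) * Pg r (m + 1) (i + 1)
              + 2 * (r : ℤ) * ((m : ℤ) + 1 - 2 * (i : ℤ)) * Pg r (m + 1) i
              + Mg r (m + 1) (i + 1) - (r : ℤ) * ((m : ℤ) + 1) * Pg r m i
          have h1 := ihP1 (i + 1)
          have h2 := ihM1 (i + 1)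
          have h3 := keyP i
          nlinarith [mul_nonneg (by nlinarith : (0:ℤ) ≤ 1 + (r : ℤ) * ((i : ℤ) + 1)) h1]
      have hMpos : ∀ i, 0 ≤ Mg r (m + 2) i := by
        rintro (_ | i)
        · rw [Mg_zero]
        · show 0 ≤ ((r : ℤ) - 1) * Pg r (m + 1) i
              + (r : ℤ) * ((i : ℤ) + 1) * Mg r (m + 1) (i + 1)
              + 2 * (r : ℤ) * ((m : ℤ) + 2 - 2 * (i : ℤ)) * Mg r (m + 1) i
              - (r : ℤ) * ((m : ℤ) + 1) * Mg r m i
          have h1 := ihP1 i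
          have h2 := ihM1 (i + 1)
          have h3 := keyM i
          nlinarith [mul_nonneg (by nlinarith : (0:ℤ) ≤ (r : ℤ) * ((i : ℤ) + 1)) h2,
            mul_nonneg (by nlinarith : (0:ℤ) ≤ (r : ℤ) - 1) h1]
      refine ⟨hPpos, hMpos, ?_, ?_⟩
      · -- H at level m+2
        intro i hcond
        rw [show m + 2 - 1 = m + 1 from rfl]
        match i with
        | 0 =>
          show ((m + 2 : ℕ) : ℤ) * Pg r (m + 1) 0 ≤ 2 * (((m + 2 : ℕ) : ℤ) - 2 * 0)
            * Pg r (m + 2) 0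
          have hrec : Pg r (m + 2) 0 = Pg r (m + 1) 0 + Mg r (m + 1) 0 := rfl
          rw [hrec]
          have := ihP1 0; have := ihM1 0
          push_cast
          nlinarith
        | (i + 1) =>
          have hi2 : 2 * i + 1 ≤ m := by omega
          have hlow : (1 + (r : ℤ) * ((i : ℤ) + 1)) * Pg r (m + 1) (i + 1)
              ≤ Pg r (m + 2) (i + 1) := by
            show _ ≤ (1 + (r : ℤ) * ((i : ℤ) + 1)) * Pg r (m + 1) (i + 1)
              + 2 * (r : ℤ) * ((m : ℤ) + 1 - 2 * (i : ℤ)) * Pg r (m + 1) i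
              + Mg r (m + 1) (i + 1) - (r : ℤ) * ((m : ℤ) + 1) * Pg r m i
            have h3 := keyP i
            have h2 := ihM1 (i + 1)
            nlinarith
          have hcoef : ((m + 2 : ℕ) : ℤ)
              ≤ 2 * (((m + 2 : ℕ) : ℤ) - 2 * ((i : ℤ) + 1)) * (1 + (r : ℤ) * ((i : ℤ) + 1)) := by
            have hii : (0 : ℤ) ≤ (i : ℤ) := by positivity
            have haa : (1 : ℤ) ≤ ((m : ℤ) + 2) - 2 * ((i : ℤ) + 1) := by
              have : (2 * i + 1 : ℤ) ≤ (m : ℤ) := by exact_mod_cast hi2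
              push_cast
              omega
            have hbb : (2 * (i : ℤ) + 3) ≤ 1 + (r : ℤ) * ((i : ℤ) + 1) := by nlinarith
            push_cast
            nlinarith [mul_nonneg (by linarith : (0:ℤ) ≤ (m : ℤ) + 2 - 2 * ((i : ℤ) + 1))
                (by linarith : (0:ℤ) ≤ 1 + (r : ℤ) * ((i : ℤ) + 1) - (2 * (i : ℤ) + 3)),
              mul_nonneg (by linarith : (0:ℤ) ≤ (m : ℤ) + 2 - 2 * ((i : ℤ) + 1) - 1)
                (by linarith : (0:ℤ) ≤ 4 * (i : ℤ) + 5)]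
          have hP := ihP1 (i + 1)
          calc ((m + 2 : ℕ) : ℤ) * Pg r (m + 1) (i + 1)
              ≤ (2 * (((m + 2 : ℕ) : ℤ) - 2 * ((i : ℤ) + 1)) * (1 + (r : ℤ) * ((i : ℤ) + 1)))
                * Pg r (m + 1) (i + 1) := mul_le_mul_of_nonneg_right hcoef hP
            _ = 2 * (((m + 2 : ℕ) : ℤ) - 2 * ((i : ℤ) + 1))
                * ((1 + (r : ℤ) * ((i : ℤ) + 1)) * Pg r (m + 1) (i + 1)) := by ring
            _ ≤ 2 * (((m + 2 : ℕ) : ℤ) - 2 * ((i : ℤ) + 1)) * Pg r (m + 2) (i + 1) := by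
                apply mul_le_mul_of_nonneg_left hlow
                have : (2 * i + 1 : ℤ) ≤ (m : ℤ) := by exact_mod_cast hi2
                push_cast
                omega
            _ = 2 * (((m + 2 : ℕ) : ℤ) - 2 * (((i : ℕ) + 1 : ℕ) : ℤ)) * Pg r (m + 2) (i + 1) := by
                push_cast; ring
      · -- G at level m+2
        intro i hi1 hcond
        rw [show m + 2 - 1 = m + 1 from rfl]
        match i, hi1 with
        | (i + 1), _ =>
          have hi2 : 2 * i ≤ m := by omega
          have hlow : (r : ℤ) * ((i : ℤ) + 1) * Mg r (m + 1) (i + 1)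
              ≤ Mg r (m + 2) (i + 1) := by
            show _ ≤ ((r : ℤ) - 1) * Pg r (m + 1) i
              + (r : ℤ) * ((i : ℤ) + 1) * Mg r (m + 1) (i + 1)
              + 2 * (r : ℤ) * ((m : ℤ) + 2 - 2 * (i : ℤ)) * Mg r (m + 1) i
              - (r : ℤ) * ((m : ℤ) + 1) * Mg r m i
            have h3 := keyM i
            have h1 := ihP1 i
            nlinarith
          have hcoef : ((m + 2 : ℕ) : ℤ)
              ≤ 2 * (((m + 2 : ℕ) : ℤ) + 1 - 2 * ((i : ℤ) + 1)) * ((r : ℤ) * ((i : ℤ) + 1)) := by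
            have hii : (0 : ℤ) ≤ (i : ℤ) := by positivity
            have haa : (1 : ℤ) ≤ ((m : ℤ) + 3) - 2 * ((i : ℤ) + 1) := by
              have : (2 * i : ℤ) ≤ (m : ℤ) := by exact_mod_cast hi2
              push_cast
              omega
            have hbb : (2 * (i : ℤ) + 2) ≤ (r : ℤ) * ((i : ℤ) + 1) := by nlinarith
            push_cast
            nlinarith [mul_nonneg (by linarith : (0:ℤ) ≤ (m : ℤ) + 3 - 2 * ((i : ℤ) + 1))
                (by linarith : (0:ℤ) ≤ (r : ℤ) * ((i : ℤ) + 1) - (2 * (i : ℤ) + 2)),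
              mul_nonneg (by linarith : (0:ℤ) ≤ (m : ℤ) + 3 - 2 * ((i : ℤ) + 1) - 1)
                (by linarith : (0:ℤ) ≤ 4 * (i : ℤ) + 3)]
          have hM := ihM1 (i + 1)
          calc ((m + 2 : ℕ) : ℤ) * Mg r (m + 1) (i + 1)
              ≤ (2 * (((m + 2 : ℕ) : ℤ) + 1 - 2 * ((i : ℤ) + 1)) * ((r : ℤ) * ((i : ℤ) + 1)))
                * Mg r (m + 1) (i + 1) := mul_le_mul_of_nonneg_right hcoef hM
            _ = 2 * (((m + 2 : ℕ) : ℤ) + 1 - 2 * ((i : ℤ) + 1))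
                * ((r : ℤ) * ((i : ℤ) + 1) * Mg r (m + 1) (i + 1)) := by ring
            _ ≤ 2 * (((m + 2 : ℕ) : ℤ) + 1 - 2 * ((i : ℤ) + 1)) * Mg r (m + 2) (i + 1) := by
                apply mul_le_mul_of_nonneg_left hlow
                have : (2 * i : ℤ) ≤ (m : ℤ) := by exact_mod_cast hi2
                push_cast
                omega
            _ = 2 * (((m + 2 : ℕ) : ℤ) + 1 - 2 * (((i : ℕ) + 1 : ℕ) : ℤ))
                * Mg r (m + 2) (i + 1) := by push_cast; ring

/-! ### basis elements and their transformation -/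

noncomputable def Bp (m i : ℕ) : ℤ[X] := X ^ i * (1 + X) ^ (m - 2 * i)

lemma onePlusX_ne : (1 + X : ℤ[X]) ≠ 0 := fun h => by
  have := congrArg (eval 0) h
  simp at this

lemma F1 (i : ℕ) : X * derivative (X ^ i : ℤ[X]) = (i : ℤ[X]) * X ^ i := by
  rw [derivative_X_pow]
  cases i with
  | zero => simp
  | succ k =>
    simp only [map_natCast, Nat.add_sub_cancel]
    rw [pow_succ]
    ring

lemma F2 (e : ℕ) : (1 + X) * derivative (((1 + X) ^ e : ℤ[X])) = (e : ℤ[X]) * (1 + X) ^ e := by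
  rw [derivative_pow]
  cases e with
  | zero => simp
  | succ k =>
    simp only [Nat.add_sub_cancel, derivative_add, derivative_one, derivative_X, zero_add,
      mul_one]
    simp only [C_add, C_1, map_natCast]
    rw [pow_succ]
    push_cast
    ring

lemma F3 (e : ℕ) : (1 + X) * ((e : ℤ[X]) * (1 + X) ^ (e - 1)) = (e : ℤ[X]) * (1 + X) ^ e := by
  cases e with
  | zero => simp
  | succ k =>
    simp only [Nat.add_sub_cancel]
    rw [pow_succ]
    push_cast
    ring

lemma Bid1 (r i e : ℕ) :
    (1 + (r : ℤ[X]) * ((2 * i + e + 1 : ℕ) : ℤ[X]) * X) * (X ^ i * (1 + X) ^ e)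
      + (r : ℤ[X]) * X * (1 - X) * derivative (X ^ i * (1 + X) ^ e)
    = (1 + (r : ℤ[X]) * (i : ℤ[X])) * (X ^ i * (1 + X) ^ (e + 1))
      + 2 * (r : ℤ[X]) * (e : ℤ[X]) * (X ^ (i + 1) * (1 + X) ^ (e - 1))
      + ((r : ℤ[X]) - 1) * (X ^ (i + 1) * (1 + X) ^ e) := by
  apply mul_right_cancel₀ onePlusX_ne
  rw [derivative_mul]
  push_cast
  linear_combination ((r : ℤ[X]) * (1 - X) * (1 + X) * (1 + X) ^ e) * F1 i
    + ((r : ℤ[X]) * X * (1 - X) * (X ^ i)) * F2 e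
    - (2 * (r : ℤ[X]) * X ^ (i + 1)) * F3 e

lemma Bid2 (r i e : ℕ) :
    (1 + (r : ℤ[X]) * ((2 * i + e : ℕ) : ℤ[X]) * X) * (X ^ i * (1 + X) ^ e)
      + (r : ℤ[X]) * X * (1 - X) * derivative (X ^ i * (1 + X) ^ e)
    = (X ^ i * (1 + X) ^ e) + (r : ℤ[X]) * (i : ℤ[X]) * (X ^ i * (1 + X) ^ (e + 1))
      + 2 * (r : ℤ[X]) * (e : ℤ[X]) * (X ^ (i + 1) * (1 + X) ^ (e - 1)) := by
  apply mul_right_cancel₀ onePlusX_ne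
  rw [derivative_mul]
  push_cast
  linear_combination ((r : ℤ[X]) * (1 - X) * (1 + X) * (1 + X) ^ e) * F1 i
    + ((r : ℤ[X]) * X * (1 - X) * (X ^ i)) * F2 e
    - (2 * (r : ℤ[X]) * X ^ (i + 1)) * F3 e

lemma TBp1 {i n : ℕ} (r : ℕ) (hcond : 2 * i ≤ n + 1) :
    (1 + (r : ℤ[X]) * ((n : ℤ[X]) + 2) * X) * Bp (n + 1) i
      + (r : ℤ[X]) * X * (1 - X) * derivative (Bp (n + 1) i)
    = (1 + (r : ℤ[X]) * (i : ℤ[X])) * Bp (n + 2) i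
      + 2 * (r : ℤ[X]) * ((n : ℤ[X]) + 1 - 2 * (i : ℤ[X])) * Bp (n + 2) (i + 1)
      + ((r : ℤ[X]) - 1) * Bp (n + 3) (i + 1) := by
  obtain ⟨e, he⟩ : ∃ e, n + 1 - 2 * i = e := ⟨_, rfl⟩
  have h1 : n + 2 - 2 * i = e + 1 := by omega
  have h2 : n + 2 - 2 * (i + 1) = e - 1 := by omega
  have h3 : n + 3 - 2 * (i + 1) = e := by omega
  have h4 : ((n : ℤ[X]) + 2) = ((2 * i + e + 1 : ℕ) : ℤ[X]) := by
    have : 2 * i + e + 1 = n + 2 := by omega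
    rw [this]; push_cast; ring
  have h5 : ((n : ℤ[X]) + 1 - 2 * (i : ℤ[X])) = ((e : ℕ) : ℤ[X]) := by
    have : e + 2 * i = n + 1 := by omega
    have hcast : ((e : ℕ) : ℤ[X]) + 2 * (i : ℤ[X]) = (n : ℤ[X]) + 1 := by
      exact_mod_cast congrArg (fun t : ℕ => (t : ℤ[X])) this
    linear_combination -hcast
  simp only [Bp]
  rw [he, h1, h2, h3, h5, h4]
  exact Bid1 r i e

lemma TBp2 {i n : ℕ} (r : ℕ) (hcond : 2 * i ≤ n + 2) :
    (1 + (r : ℤ[X]) * ((n : ℤ[X]) + 2) * X) * Bp (n + 2) i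
      + (r : ℤ[X]) * X * (1 - X) * derivative (Bp (n + 2) i)
    = Bp (n + 2) i + (r : ℤ[X]) * (i : ℤ[X]) * Bp (n + 3) i
      + 2 * (r : ℤ[X]) * ((n : ℤ[X]) + 2 - 2 * (i : ℤ[X])) * Bp (n + 3) (i + 1) := by
  obtain ⟨e, he⟩ : ∃ e, n + 2 - 2 * i = e := ⟨_, rfl⟩
  have h1 : n + 3 - 2 * i = e + 1 := by omega
  have h2 : n + 3 - 2 * (i + 1) = e - 1 := by omega
  have h4 : ((n : ℤ[X]) + 2) = ((2 * i + e : ℕ) : ℤ[X]) := by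
    have : 2 * i + e = n + 2 := by omega
    rw [this]; push_cast; ring
  have h5 : ((n : ℤ[X]) + 2 - 2 * (i : ℤ[X])) = ((e : ℕ) : ℤ[X]) := by
    have : e + 2 * i = n + 2 := by omega
    have hcast : ((e : ℕ) : ℤ[X]) + 2 * (i : ℤ[X]) = (n : ℤ[X]) + 2 := by
      exact_mod_cast congrArg (fun t : ℕ => (t : ℤ[X])) this
    linear_combination -hcast
  simp only [Bp]
  rw [he, h1, h2, h5, h4]
  exact Bid2 r i e

lemma TBp3 (n i : ℕ) : X * Bp n i = Bp (n + 2) (i + 1) := by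
  simp only [Bp]
  rw [show n + 2 - 2 * (i + 1) = n - 2 * i from by omega, pow_succ]
  ring

/-! ### decomposition -/

lemma sum_extend (f : ℕ → ℤ[X]) {N M : ℕ} (h : N ≤ M)
    (hz : ∀ i, N ≤ i → f i = 0) :
    ∑ i ∈ range N, f i = ∑ i ∈ range M, f i := by
  apply Finset.sum_subset (Finset.range_subset_range.mpr h)
  intro x hx hnx
  rw [Finset.mem_range] at hnx
  push_neg at hnx
  exact hz x hnx

lemma colEulerian_zero (r : ℕ) : colEulerian 0 r = 1 := by
  unfold colEulerian
  have h : ∀ w : ColoredPerm 0 r, (desSet w).card = 0 := fun w => by simp [desSet]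
  rw [Finset.sum_congr rfl (fun w _ => by rw [h w, pow_zero])]
  rw [Finset.sum_const, Finset.card_univ]
  simp [Fintype.card_prod, Fintype.card_perm]

lemma colBinom_zero (r : ℕ) : colBinomEulerian 0 r = 1 := by
  rw [colBinomEulerian]
  simp [colEulerian_zero]

lemma colBinom_one (hr : 0 < r) : colBinomEulerian 1 r = 1 + (r : ℤ[X]) * X := by
  rw [colBinomEulerian]
  rw [Finset.sum_range_succ, Finset.sum_range_one]
  rw [colEulerian_zero, colEulerian_succ hr 0, colEulerian_zero]
  simp only [derivative_one, Nat.choose_zero_right, Nat.choose_one_right, Nat.cast_zero,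
    Nat.cast_one, mul_zero, pow_one, pow_zero]
  push_cast
  ring

lemma pieceP1 (r m : ℕ) :
    (1 + (r : ℤ[X]) * ((m : ℤ[X]) + 2) * X)
        * (∑ i ∈ range (m + 3), (Pg r (m + 1) i : ℤ[X]) * Bp (m + 1) i)
      + (r : ℤ[X]) * X * (1 - X)
        * derivative (∑ i ∈ range (m + 3), (Pg r (m + 1) i : ℤ[X]) * Bp (m + 1) i)
    = (∑ i ∈ range (m + 4),
        (1 + (r : ℤ[X]) * (i : ℤ[X])) * (Pg r (m + 1) i : ℤ[X]) * Bp (m + 2) i)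
      + (∑ i ∈ range (m + 4), 2 * (r : ℤ[X]) * ((m : ℤ[X]) + 1 - 2 * (i : ℤ[X]))
          * (Pg r (m + 1) i : ℤ[X]) * Bp (m + 2) (i + 1))
      + (∑ i ∈ range (m + 4),
          ((r : ℤ[X]) - 1) * (Pg r (m + 1) i : ℤ[X]) * Bp (m + 3) (i + 1)) := by
  rw [derivative_sum, Finset.mul_sum, Finset.mul_sum, ← Finset.sum_add_distrib]
  have key : ∀ i ∈ range (m + 3),
      (1 + (r : ℤ[X]) * ((m : ℤ[X]) + 2) * X) * ((Pg r (m + 1) i : ℤ[X]) * Bp (m + 1) i)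
        + (r : ℤ[X]) * X * (1 - X) * derivative ((Pg r (m + 1) i : ℤ[X]) * Bp (m + 1) i)
      = (1 + (r : ℤ[X]) * (i : ℤ[X])) * (Pg r (m + 1) i : ℤ[X]) * Bp (m + 2) i
        + 2 * (r : ℤ[X]) * ((m : ℤ[X]) + 1 - 2 * (i : ℤ[X]))
          * (Pg r (m + 1) i : ℤ[X]) * Bp (m + 2) (i + 1)
        + ((r : ℤ[X]) - 1) * (Pg r (m + 1) i : ℤ[X]) * Bp (m + 3) (i + 1) := by
    intro i _
    rw [derivative_mul, derivative_intCast]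
    by_cases hcase : 2 * i ≤ m + 1
    · linear_combination ((Pg r (m + 1) i : ℤ[X])) * TBp1 (n := m) r hcase
    · have hp : Pg r (m + 1) i = 0 := Pg_support (by omega)
      rw [hp]
      push_cast
      ring
  rw [Finset.sum_congr rfl key, Finset.sum_add_distrib, Finset.sum_add_distrib]
  congr 1
  · congr 1
    · exact sum_extend _ (by omega) (fun i hi => by
        rw [Pg_support (by omega : m + 1 < 2 * i)]; push_cast; ring)
    · exact sum_extend _ (by omega) (fun i hi => by
        rw [Pg_support (by omega : m + 1 < 2 * i)]; push_cast; ring)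
  · exact sum_extend _ (by omega) (fun i hi => by
      rw [Pg_support (by omega : m + 1 < 2 * i)]; push_cast; ring)

lemma pieceM1 (r m : ℕ) :
    (1 + (r : ℤ[X]) * ((m : ℤ[X]) + 2) * X)
        * (∑ i ∈ range (m + 3), (Mg r (m + 1) i : ℤ[X]) * Bp (m + 2) i)
      + (r : ℤ[X]) * X * (1 - X)
        * derivative (∑ i ∈ range (m + 3), (Mg r (m + 1) i : ℤ[X]) * Bp (m + 2) i)
    = (∑ i ∈ range (m + 4), (Mg r (m + 1) i : ℤ[X]) * Bp (m + 2) i)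
      + (∑ i ∈ range (m + 4),
          (r : ℤ[X]) * (i : ℤ[X]) * (Mg r (m + 1) i : ℤ[X]) * Bp (m + 3) i)
      + (∑ i ∈ range (m + 4), 2 * (r : ℤ[X]) * ((m : ℤ[X]) + 2 - 2 * (i : ℤ[X]))
          * (Mg r (m + 1) i : ℤ[X]) * Bp (m + 3) (i + 1)) := by
  rw [derivative_sum, Finset.mul_sum, Finset.mul_sum, ← Finset.sum_add_distrib]
  have key : ∀ i ∈ range (m + 3),
      (1 + (r : ℤ[X]) * ((m : ℤ[X]) + 2) * X) * ((Mg r (m + 1) i : ℤ[X]) * Bp (m + 2) i)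
        + (r : ℤ[X]) * X * (1 - X) * derivative ((Mg r (m + 1) i : ℤ[X]) * Bp (m + 2) i)
      = (Mg r (m + 1) i : ℤ[X]) * Bp (m + 2) i
        + (r : ℤ[X]) * (i : ℤ[X]) * (Mg r (m + 1) i : ℤ[X]) * Bp (m + 3) i
        + 2 * (r : ℤ[X]) * ((m : ℤ[X]) + 2 - 2 * (i : ℤ[X]))
          * (Mg r (m + 1) i : ℤ[X]) * Bp (m + 3) (i + 1) := by
    intro i _
    rw [derivative_mul, derivative_intCast]
    by_cases hcase : 2 * i ≤ m + 2
    · linear_combination ((Mg r (m + 1) i : ℤ[X])) * TBp2 (n := m) r hcase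
    · have hp : Mg r (m + 1) i = 0 := Mg_support (by omega)
      rw [hp]
      push_cast
      ring
  rw [Finset.sum_congr rfl key, Finset.sum_add_distrib, Finset.sum_add_distrib]
  congr 1
  · congr 1
    · exact sum_extend _ (by omega) (fun i hi => by
        rw [Mg_support (by omega : m + 1 + 1 < 2 * i)]; push_cast; ring)
    · exact sum_extend _ (by omega) (fun i hi => by
        rw [Mg_support (by omega : m + 1 + 1 < 2 * i)]; push_cast; ring)
  · exact sum_extend _ (by omega) (fun i hi => by
      rw [Mg_support (by omega : m + 1 + 1 < 2 * i)]; push_cast; ring)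

lemma pieceP0 (r m : ℕ) :
    (r : ℤ[X]) * ((m : ℤ[X]) + 1) * X
        * (∑ i ∈ range (m + 2), (Pg r m i : ℤ[X]) * Bp m i)
    = ∑ i ∈ range (m + 4), (r : ℤ[X]) * ((m : ℤ[X]) + 1)
        * (Pg r m i : ℤ[X]) * Bp (m + 2) (i + 1) := by
  rw [Finset.mul_sum]
  have key : ∀ i ∈ range (m + 2),
      (r : ℤ[X]) * ((m : ℤ[X]) + 1) * X * ((Pg r m i : ℤ[X]) * Bp m i)
      = (r : ℤ[X]) * ((m : ℤ[X]) + 1) * (Pg r m i : ℤ[X]) * Bp (m + 2) (i + 1) := by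
    intro i _
    linear_combination ((r : ℤ[X]) * ((m : ℤ[X]) + 1) * (Pg r m i : ℤ[X])) * TBp3 m i
  rw [Finset.sum_congr rfl key]
  exact sum_extend _ (by omega) (fun i hi => by
    rw [Pg_support (by omega : m < 2 * i)]; push_cast; ring)

lemma pieceM0 (r m : ℕ) :
    (r : ℤ[X]) * ((m : ℤ[X]) + 1) * X
        * (∑ i ∈ range (m + 2), (Mg r m i : ℤ[X]) * Bp (m + 1) i)
    = ∑ i ∈ range (m + 4), (r : ℤ[X]) * ((m : ℤ[X]) + 1)
        * (Mg r m i : ℤ[X]) * Bp (m + 3) (i + 1) := by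
  rw [Finset.mul_sum]
  have key : ∀ i ∈ range (m + 2),
      (r : ℤ[X]) * ((m : ℤ[X]) + 1) * X * ((Mg r m i : ℤ[X]) * Bp (m + 1) i)
      = (r : ℤ[X]) * ((m : ℤ[X]) + 1) * (Mg r m i : ℤ[X]) * Bp (m + 3) (i + 1) := by
    intro i _
    linear_combination ((r : ℤ[X]) * ((m : ℤ[X]) + 1) * (Mg r m i : ℤ[X])) * TBp3 (m + 1) i
  rw [Finset.sum_congr rfl key]
  exact sum_extend _ (by omega) (fun i hi => by
    rw [Mg_support (by omega : m + 1 < 2 * i)]; push_cast; ring)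

lemma targetP (r m : ℕ) :
    ∑ i ∈ range (m + 4), (Pg r (m + 2) i : ℤ[X]) * Bp (m + 2) i
    = (∑ i ∈ range (m + 4),
        (1 + (r : ℤ[X]) * (i : ℤ[X])) * (Pg r (m + 1) i : ℤ[X]) * Bp (m + 2) i)
      + (∑ i ∈ range (m + 4), 2 * (r : ℤ[X]) * ((m : ℤ[X]) + 1 - 2 * (i : ℤ[X]))
          * (Pg r (m + 1) i : ℤ[X]) * Bp (m + 2) (i + 1))
      + (∑ i ∈ range (m + 4), (Mg r (m + 1) i : ℤ[X]) * Bp (m + 2) i)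
      - (∑ i ∈ range (m + 4), (r : ℤ[X]) * ((m : ℤ[X]) + 1)
          * (Pg r m i : ℤ[X]) * Bp (m + 2) (i + 1)) := by
  rw [Finset.sum_range_succ' (fun i => (Pg r (m + 2) i : ℤ[X]) * Bp (m + 2) i) (m + 3)]
  have hrec : ∀ i ∈ range (m + 3),
      (Pg r (m + 2) (i + 1) : ℤ[X]) * Bp (m + 2) (i + 1)
      = (1 + (r : ℤ[X]) * (((i + 1 : ℕ)) : ℤ[X])) * (Pg r (m + 1) (i + 1) : ℤ[X])
          * Bp (m + 2) (i + 1)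
        + 2 * (r : ℤ[X]) * ((m : ℤ[X]) + 1 - 2 * (i : ℤ[X]))
          * (Pg r (m + 1) i : ℤ[X]) * Bp (m + 2) (i + 1)
        + (Mg r (m + 1) (i + 1) : ℤ[X]) * Bp (m + 2) (i + 1)
        - (r : ℤ[X]) * ((m : ℤ[X]) + 1) * (Pg r m i : ℤ[X]) * Bp (m + 2) (i + 1) := by
    intro i _
    have h0 : Pg r (m + 2) (i + 1)
        = (1 + (r : ℤ) * ((i : ℤ) + 1)) * Pg r (m + 1) (i + 1)
          + 2 * (r : ℤ) * ((m : ℤ) + 1 - 2 * (i : ℤ)) * Pg r (m + 1) i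
          + Mg r (m + 1) (i + 1) - (r : ℤ) * ((m : ℤ) + 1) * Pg r m i := rfl
    rw [h0]
    push_cast
    ring
  rw [Finset.sum_congr rfl hrec]
  rw [show (∑ i ∈ range (m + 3),
      ((1 + (r : ℤ[X]) * (((i + 1 : ℕ)) : ℤ[X])) * (Pg r (m + 1) (i + 1) : ℤ[X])
          * Bp (m + 2) (i + 1)
        + 2 * (r : ℤ[X]) * ((m : ℤ[X]) + 1 - 2 * (i : ℤ[X]))
          * (Pg r (m + 1) i : ℤ[X]) * Bp (m + 2) (i + 1)
        + (Mg r (m + 1) (i + 1) : ℤ[X]) * Bp (m + 2) (i + 1)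
        - (r : ℤ[X]) * ((m : ℤ[X]) + 1) * (Pg r m i : ℤ[X]) * Bp (m + 2) (i + 1)))
      = (∑ i ∈ range (m + 3), (1 + (r : ℤ[X]) * (((i + 1 : ℕ)) : ℤ[X]))
          * (Pg r (m + 1) (i + 1) : ℤ[X]) * Bp (m + 2) (i + 1))
        + (∑ i ∈ range (m + 3), 2 * (r : ℤ[X]) * ((m : ℤ[X]) + 1 - 2 * (i : ℤ[X]))
          * (Pg r (m + 1) i : ℤ[X]) * Bp (m + 2) (i + 1))
        + (∑ i ∈ range (m + 3), (Mg r (m + 1) (i + 1) : ℤ[X]) * Bp (m + 2) (i + 1))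
        - (∑ i ∈ range (m + 3), (r : ℤ[X]) * ((m : ℤ[X]) + 1)
          * (Pg r m i : ℤ[X]) * Bp (m + 2) (i + 1)) from by
    rw [← Finset.sum_add_distrib, ← Finset.sum_add_distrib, ← Finset.sum_sub_distrib]]
  have hB : (∑ i ∈ range (m + 3), 2 * (r : ℤ[X]) * ((m : ℤ[X]) + 1 - 2 * (i : ℤ[X]))
        * (Pg r (m + 1) i : ℤ[X]) * Bp (m + 2) (i + 1))
      = (∑ i ∈ range (m + 4), 2 * (r : ℤ[X]) * ((m : ℤ[X]) + 1 - 2 * (i : ℤ[X]))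
        * (Pg r (m + 1) i : ℤ[X]) * Bp (m + 2) (i + 1)) :=
    sum_extend _ (by omega) (fun i hi => by
      rw [Pg_support (by omega : m + 1 < 2 * i)]; push_cast; ring)
  have hD : (∑ i ∈ range (m + 3), (r : ℤ[X]) * ((m : ℤ[X]) + 1)
        * (Pg r m i : ℤ[X]) * Bp (m + 2) (i + 1))
      = (∑ i ∈ range (m + 4), (r : ℤ[X]) * ((m : ℤ[X]) + 1)
        * (Pg r m i : ℤ[X]) * Bp (m + 2) (i + 1)) :=
    sum_extend _ (by omega) (fun i hi => by
      rw [Pg_support (by omega : m < 2 * i)]; push_cast; ring)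
  rw [hB, hD]
  rw [Finset.sum_range_succ' (fun i =>
    (1 + (r : ℤ[X]) * (i : ℤ[X])) * (Pg r (m + 1) i : ℤ[X]) * Bp (m + 2) i) (m + 3)]
  rw [Finset.sum_range_succ' (fun i => (Mg r (m + 1) i : ℤ[X]) * Bp (m + 2) i) (m + 3)]
  have h00 : (Pg r (m + 2) 0 : ℤ[X]) * Bp (m + 2) 0
        = (1 + (r : ℤ[X]) * ((0 : ℕ) : ℤ[X])) * (Pg r (m + 1) 0 : ℤ[X]) * Bp (m + 2) 0
          + (Mg r (m + 1) 0 : ℤ[X]) * Bp (m + 2) 0 := by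
    have h0 : Pg r (m + 2) 0 = Pg r (m + 1) 0 + Mg r (m + 1) 0 := rfl
    rw [h0]
    push_cast
    ring
  rw [h00]
  ring

lemma targetM (r m : ℕ) :
    ∑ i ∈ range (m + 4), (Mg r (m + 2) i : ℤ[X]) * Bp (m + 3) i
    = (∑ i ∈ range (m + 4),
        ((r : ℤ[X]) - 1) * (Pg r (m + 1) i : ℤ[X]) * Bp (m + 3) (i + 1))
      + (∑ i ∈ range (m + 4),
          (r : ℤ[X]) * (i : ℤ[X]) * (Mg r (m + 1) i : ℤ[X]) * Bp (m + 3) i)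
      + (∑ i ∈ range (m + 4), 2 * (r : ℤ[X]) * ((m : ℤ[X]) + 2 - 2 * (i : ℤ[X]))
          * (Mg r (m + 1) i : ℤ[X]) * Bp (m + 3) (i + 1))
      - (∑ i ∈ range (m + 4), (r : ℤ[X]) * ((m : ℤ[X]) + 1)
          * (Mg r m i : ℤ[X]) * Bp (m + 3) (i + 1)) := by
  rw [Finset.sum_range_succ' (fun i => (Mg r (m + 2) i : ℤ[X]) * Bp (m + 3) i) (m + 3)]
  have hrec : ∀ i ∈ range (m + 3),
      (Mg r (m + 2) (i + 1) : ℤ[X]) * Bp (m + 3) (i + 1)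
      = ((r : ℤ[X]) - 1) * (Pg r (m + 1) i : ℤ[X]) * Bp (m + 3) (i + 1)
        + (r : ℤ[X]) * (((i + 1 : ℕ)) : ℤ[X]) * (Mg r (m + 1) (i + 1) : ℤ[X])
          * Bp (m + 3) (i + 1)
        + 2 * (r : ℤ[X]) * ((m : ℤ[X]) + 2 - 2 * (i : ℤ[X]))
          * (Mg r (m + 1) i : ℤ[X]) * Bp (m + 3) (i + 1)
        - (r : ℤ[X]) * ((m : ℤ[X]) + 1) * (Mg r m i : ℤ[X]) * Bp (m + 3) (i + 1) := by
    intro i _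
    have h0 : Mg r (m + 2) (i + 1)
        = ((r : ℤ) - 1) * Pg r (m + 1) i + (r : ℤ) * ((i : ℤ) + 1) * Mg r (m + 1) (i + 1)
          + 2 * (r : ℤ) * ((m : ℤ) + 2 - 2 * (i : ℤ)) * Mg r (m + 1) i
          - (r : ℤ) * ((m : ℤ) + 1) * Mg r m i := rfl
    rw [h0]
    push_cast
    ring
  rw [Finset.sum_congr rfl hrec]
  rw [show (∑ i ∈ range (m + 3),
      (((r : ℤ[X]) - 1) * (Pg r (m + 1) i : ℤ[X]) * Bp (m + 3) (i + 1)
        + (r : ℤ[X]) * (((i + 1 : ℕ)) : ℤ[X]) * (Mg r (m + 1) (i + 1) : ℤ[X])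
          * Bp (m + 3) (i + 1)
        + 2 * (r : ℤ[X]) * ((m : ℤ[X]) + 2 - 2 * (i : ℤ[X]))
          * (Mg r (m + 1) i : ℤ[X]) * Bp (m + 3) (i + 1)
        - (r : ℤ[X]) * ((m : ℤ[X]) + 1) * (Mg r m i : ℤ[X]) * Bp (m + 3) (i + 1)))
      = (∑ i ∈ range (m + 3),
          ((r : ℤ[X]) - 1) * (Pg r (m + 1) i : ℤ[X]) * Bp (m + 3) (i + 1))
        + (∑ i ∈ range (m + 3), (r : ℤ[X]) * (((i + 1 : ℕ)) : ℤ[X])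
          * (Mg r (m + 1) (i + 1) : ℤ[X]) * Bp (m + 3) (i + 1))
        + (∑ i ∈ range (m + 3), 2 * (r : ℤ[X]) * ((m : ℤ[X]) + 2 - 2 * (i : ℤ[X]))
          * (Mg r (m + 1) i : ℤ[X]) * Bp (m + 3) (i + 1))
        - (∑ i ∈ range (m + 3), (r : ℤ[X]) * ((m : ℤ[X]) + 1)
          * (Mg r m i : ℤ[X]) * Bp (m + 3) (i + 1)) from by
    rw [← Finset.sum_add_distrib, ← Finset.sum_add_distrib, ← Finset.sum_sub_distrib]]
  have hA : (∑ i ∈ range (m + 3),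
        ((r : ℤ[X]) - 1) * (Pg r (m + 1) i : ℤ[X]) * Bp (m + 3) (i + 1))
      = (∑ i ∈ range (m + 4),
        ((r : ℤ[X]) - 1) * (Pg r (m + 1) i : ℤ[X]) * Bp (m + 3) (i + 1)) :=
    sum_extend _ (by omega) (fun i hi => by
      rw [Pg_support (by omega : m + 1 < 2 * i)]; push_cast; ring)
  have hC : (∑ i ∈ range (m + 3), 2 * (r : ℤ[X]) * ((m : ℤ[X]) + 2 - 2 * (i : ℤ[X]))
        * (Mg r (m + 1) i : ℤ[X]) * Bp (m + 3) (i + 1))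
      = (∑ i ∈ range (m + 4), 2 * (r : ℤ[X]) * ((m : ℤ[X]) + 2 - 2 * (i : ℤ[X]))
        * (Mg r (m + 1) i : ℤ[X]) * Bp (m + 3) (i + 1)) :=
    sum_extend _ (by omega) (fun i hi => by
      rw [Mg_support (by omega : m + 1 + 1 < 2 * i)]; push_cast; ring)
  have hD : (∑ i ∈ range (m + 3), (r : ℤ[X]) * ((m : ℤ[X]) + 1)
        * (Mg r m i : ℤ[X]) * Bp (m + 3) (i + 1))
      = (∑ i ∈ range (m + 4), (r : ℤ[X]) * ((m : ℤ[X]) + 1)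
        * (Mg r m i : ℤ[X]) * Bp (m + 3) (i + 1)) :=
    sum_extend _ (by omega) (fun i hi => by
      rw [Mg_support (by omega : m + 1 < 2 * i)]; push_cast; ring)
  rw [hA, hC, hD]
  rw [Finset.sum_range_succ' (fun i =>
    (r : ℤ[X]) * (i : ℤ[X]) * (Mg r (m + 1) i : ℤ[X]) * Bp (m + 3) i) (m + 3)]
  have h0z : (Mg r (m + 2) 0 : ℤ[X]) = 0 := by rw [Mg_zero]; push_cast; ring
  rw [h0z]
  have h0z2 : (r : ℤ[X]) * ((0 : ℕ) : ℤ[X]) * (Mg r (m + 1) 0 : ℤ[X]) * Bp (m + 3) 0 = 0 := by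
    push_cast
    ring
  rw [h0z2]
  ring

lemma decomp (r : ℕ) (hr : 0 < r) (n : ℕ) :
    colBinomEulerian n r
      = (∑ i ∈ range (n + 2), (Pg r n i : ℤ[X]) * Bp n i)
        + (∑ i ∈ range (n + 2), (Mg r n i : ℤ[X]) * Bp (n + 1) i) := by
  induction n using Nat.strong_induction_on with
  | _ n ih =>
    match n with
    | 0 =>
      rw [colBinom_zero]
      rw [Finset.sum_range_succ, Finset.sum_range_succ, Finset.sum_range_zero,
        Finset.sum_range_succ, Finset.sum_range_succ, Finset.sum_range_zero]
      have h1 : Pg r 0 0 = 1 := rfl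
      have h2 : Pg r 0 1 = 0 := rfl
      have h3 : Mg r 0 0 = 0 := rfl
      have h4 : Mg r 0 1 = 0 := rfl
      have h5 : Bp 0 0 = 1 := by simp [Bp]
      rw [h1, h2, h3, h4, h5]
      push_cast
      ring
    | 1 =>
      rw [colBinom_one hr]
      rw [Finset.sum_range_succ, Finset.sum_range_succ, Finset.sum_range_succ,
        Finset.sum_range_zero, Finset.sum_range_succ, Finset.sum_range_succ,
        Finset.sum_range_succ, Finset.sum_range_zero]
      have h1 : Pg r 1 0 = 1 := rfl
      have h2 : Pg r 1 1 = 0 := rfl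
      have h3 : Pg r 1 2 = 0 := rfl
      have h4 : Mg r 1 0 = 0 := rfl
      have h5 : Mg r 1 1 = (r : ℤ) - 1 := rfl
      have h6 : Mg r 1 2 = 0 := rfl
      have h7 : Bp 1 0 = 1 + X := by simp [Bp]
      have h8 : Bp 2 1 = X := by
        rw [Bp, show 2 - 2 * 1 = 0 from rfl]
        simp
      rw [h1, h2, h3, h4, h5, h6, h7, h8]
      push_cast
      ring
    | (m + 2) =>
      have IH1 := ih (m + 1) (by omega)
      have IH0 := ih m (by omega)
      rw [colBinom_rec hr m, IH1, IH0, derivative_add]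
      rw [show m + 1 + 2 = m + 3 from rfl, show m + 2 + 2 = m + 4 from rfl] at *
      rw [targetP r m, targetM r m]
      linear_combination pieceP1 r m + pieceM1 r m - pieceP0 r m - pieceM0 r m

theorem colBinomEulerian_gamma_decomposition' (n r : ℕ) (hn : 1 ≤ n) (hr : 2 ≤ r) :
    ∃ γp γm : ℕ → ℕ,
      colBinomEulerian n r =
        (∑ i ∈ range (n / 2 + 1), (γp i : ℤ[X]) * X ^ i * (1 + X) ^ (n - 2 * i)) +
          ∑ i ∈ Icc 1 ((n + 1) / 2), (γm i : ℤ[X]) * X ^ i * (1 + X) ^ (n + 1 - 2 * i) := by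
  obtain ⟨hP, hM, -, -⟩ := Pg_Mg_pos r hr n
  refine ⟨fun i => (Pg r n i).toNat, fun i => (Mg r n i).toNat, ?_⟩
  rw [decomp r (by omega) n]
  have hcastP : ∀ i, (((Pg r n i).toNat : ℕ) : ℤ[X]) = ((Pg r n i : ℤ) : ℤ[X]) := fun i => by
    rw [← Int.cast_natCast, Int.toNat_of_nonneg (hP i)]
  have hcastM : ∀ i, (((Mg r n i).toNat : ℕ) : ℤ[X]) = ((Mg r n i : ℤ) : ℤ[X]) := fun i => by
    rw [← Int.cast_natCast, Int.toNat_of_nonneg (hM i)]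
  congr 1
  · calc ∑ i ∈ range (n + 2), (Pg r n i : ℤ[X]) * Bp n i
        = ∑ i ∈ range (n / 2 + 1), (Pg r n i : ℤ[X]) * Bp n i := by
          refine (sum_extend _ (by omega) (fun i hi => ?_)).symm
          rw [Pg_support (by omega : n < 2 * i)]
          push_cast
          ring
      _ = ∑ i ∈ range (n / 2 + 1), (((Pg r n i).toNat : ℕ) : ℤ[X]) * X ^ i
            * (1 + X) ^ (n - 2 * i) := by
          refine Finset.sum_congr rfl (fun i _ => ?_)
          rw [hcastP i, Bp]
          ring
  · calc ∑ i ∈ range (n + 2), (Mg r n i : ℤ[X]) * Bp (n + 1) i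
        = ∑ i ∈ range ((n + 1) / 2 + 1), (Mg r n i : ℤ[X]) * Bp (n + 1) i := by
          refine (sum_extend _ (by omega) (fun i hi => ?_)).symm
          rw [Mg_support (by omega : n + 1 < 2 * i)]
          push_cast
          ring
      _ = ∑ i ∈ Icc 1 ((n + 1) / 2), (Mg r n i : ℤ[X]) * Bp (n + 1) i := by
          rw [show range ((n + 1) / 2 + 1) = insert 0 (Icc 1 ((n + 1) / 2)) from by
            ext x; simp [Finset.mem_Icc, Finset.mem_insert]; omega]
          rw [Finset.sum_insert (by simp)]
          rw [Mg_zero]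
          push_cast
          ring
      _ = ∑ i ∈ Icc 1 ((n + 1) / 2), (((Mg r n i).toNat : ℕ) : ℤ[X]) * X ^ i
            * (1 + X) ^ (n + 1 - 2 * i) := by
          refine Finset.sum_congr rfl (fun i _ => ?_)
          rw [hcastM i, Bp]
          ring


/-- For `n ≥ 1` and `r ≥ 2`, the colored binomial Eulerian polynomial
`Ã_{n,r}(t)` is the sum of a γ-positive polynomial with center `n/2` and a γ-positive
polynomial with center `(n+1)/2` and zero constant term. -/
theorem colBinomEulerian_gamma_decomposition (n r : ℕ) (hn : 1 ≤ n) (hr : 2 ≤ r) :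
    ∃ γp γm : ℕ → ℕ,
      colBinomEulerian n r =
        (∑ i ∈ range (n / 2 + 1), (γp i : ℤ[X]) * X ^ i * (1 + X) ^ (n - 2 * i)) +
          ∑ i ∈ Icc 1 ((n + 1) / 2), (γm i : ℤ[X]) * X ^ i * (1 + X) ^ (n + 1 - 2 * i) := by
  exact colBinomEulerian_gamma_decomposition' n r hn hr
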